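/- arXiv:2406.10145 — 13 statements merged into one kernel-verified Lean document; each statement's English description precedes it below -/
import Mathlib

section
/- Let Λ ⊆ ℕ₀^d be a finite lower set, n ∈ ℕ, and z ∈ ℤ^d. Then (n,z) is Plan 0 admissible for the sumset Λ ⊕ Λ if and only if (n,z) is Plan A admissible for Λ. -/
open Pointwise

/-- A set `Λ ⊆ ℕ₀^d` is lower (downward closed). -/
def IsLower {d : ℕ} (Λ : Set (Fin d → ℕ)) : Prop :=
  ∀ k ∈ Λ, ∀ h : Fin d → ℕ, (∀ j, h j ≤ k j) → h ∈ Λ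

/-- The mirrored set `M(Λ) = {h ∈ ℤ^d : |h| ∈ Λ}`. -/
def mirror {d : ℕ} (Λ : Set (Fin d → ℕ)) : Set (Fin d → ℤ) :=
  {h | (fun j => (h j).natAbs) ∈ Λ}

/-- Integer dot product. -/
def dotZ {d : ℕ} (h z : Fin d → ℤ) : ℤ := ∑ j, h j * z j

/-- Cast a multi-index in `ℕ₀^d` to `ℤ^d`. -/
def natCast {d : ℕ} (h : Fin d → ℕ) : Fin d → ℤ := fun j => (h j : ℤ)

/-- `s` is a component-wise sign flip of `h`. -/
def IsSignFlip {d : ℕ} (h : Fin d → ℕ) (s : Fin d → ℤ) : Prop :=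
  ∀ j, (s j).natAbs = h j

/-- Plan 0 admissibility: `h·z ≢ 0 (mod n)` for all nonzero `h ∈ M(Λ)`. -/
def Plan0 {d : ℕ} (Λ : Set (Fin d → ℕ)) (n : ℕ) (z : Fin d → ℤ) : Prop :=
  ∀ h ∈ mirror Λ, h ≠ 0 → ¬ (dotZ h z ≡ 0 [ZMOD (n : ℤ)])

/-- Plan A admissibility: `h·z ≢ h'·z (mod n)` for all distinct `h, h' ∈ M(Λ)`. -/
def PlanA {d : ℕ} (Λ : Set (Fin d → ℕ)) (n : ℕ) (z : Fin d → ℤ) : Prop :=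
  ∀ h ∈ mirror Λ, ∀ h' ∈ mirror Λ, h ≠ h' →
    ¬ (dotZ h z ≡ dotZ h' z [ZMOD (n : ℤ)])

/-- Plan B admissibility. -/
def PlanB {d : ℕ} (Λ : Set (Fin d → ℕ)) (n : ℕ) (z : Fin d → ℤ) : Prop :=
  ∀ h ∈ Λ, ∀ h' ∈ Λ, ∀ s : Fin d → ℤ, IsSignFlip h s → s ≠ natCast h' →
    ¬ (dotZ s z ≡ dotZ (natCast h') z [ZMOD (n : ℤ)])

/-- Plan C admissibility. -/
def PlanC {d : ℕ} (Λ : Set (Fin d → ℕ)) (n : ℕ) (z : Fin d → ℤ) : Prop :=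
  ∀ h ∈ Λ, ∀ h' ∈ Λ, h ≠ h' → ∀ s : Fin d → ℤ, IsSignFlip h s →
    ¬ (dotZ s z ≡ dotZ (natCast h') z [ZMOD (n : ℤ)])

theorem plan0_sumset_iff_planA {d : ℕ} (Λ : Set (Fin d → ℕ)) (hfin : Λ.Finite)
    (hlow : IsLower Λ) (n : ℕ) (hn : 0 < n) (z : Fin d → ℤ) :
    Plan0 (Λ + Λ) n z ↔ PlanA Λ n z := by
  have dot_sub : ∀ a b : Fin d → ℤ, dotZ (a - b) z = dotZ a z - dotZ b z := by
    intro a b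
    simp [dotZ, sub_mul, Finset.sum_sub_distrib]
  constructor
  · intro P0 h hmem h' hmem' hne heq
    set g : Fin d → ℤ := h - h' with hg
    have gne : g ≠ 0 := sub_ne_zero.mpr hne
    have gmem : g ∈ mirror (Λ + Λ) := by
      show (fun j => (g j).natAbs) ∈ Λ + Λ
      rw [Set.mem_add]
      refine ⟨fun j => min ((g j).natAbs) ((h j).natAbs), ?_,
        fun j => (g j).natAbs - min ((g j).natAbs) ((h j).natAbs), ?_, ?_⟩
      · exact hlow _ hmem _ fun j => min_le_right _ _
      · refine hlow _ hmem' _ fun j => ?_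
        have := Int.natAbs_sub_le (h j) (h' j)
        simp only [hg, Pi.sub_apply]
        omega
      · funext j
        simp only [Pi.add_apply]
        omega
    have : dotZ g z ≡ 0 [ZMOD (n : ℤ)] := by
      have := heq.sub_right (dotZ h' z)
      rwa [sub_self, ← dot_sub] at this
    exact P0 g gmem gne this
  · intro PA h hmem hne heq
    obtain ⟨k, hk, k', hk', hsum⟩ := Set.mem_add.mp hmem
    set a : Fin d → ℤ := fun j => (h j).sign * (k j) with ha
    set b : Fin d → ℤ := fun j => -((h j).sign) * (k' j) with hb
    have habs : ∀ j, (k j : ℤ) + (k' j : ℤ) = ((h j).natAbs : ℤ) := by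
      intro j
      have := congrFun hsum j
      simp only [Pi.add_apply] at this
      exact_mod_cast this
    have hsub : a - b = h := by
      funext j
      have : a j - b j = (h j).sign * ((k j : ℤ) + (k' j : ℤ)) := by
        simp only [ha, hb, Pi.sub_apply]; ring
      show a j - b j = h j
      rw [this, habs j, Int.sign_mul_natAbs]
    have amem : a ∈ mirror Λ := by
      show (fun j => (a j).natAbs) ∈ Λ
      refine hlow _ hk _ fun j => ?_
      simp only [ha, Int.natAbs_mul, Int.natAbs_natCast]
      have : (h j).sign.natAbs ≤ 1 := by
        rcases Int.lt_trichotomy (h j) 0 with hj | hj | hj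
        · simp [Int.sign_eq_neg_one_of_neg hj]
        · simp [hj]
        · simp [Int.sign_eq_one_of_pos hj]
      nlinarith [Nat.zero_le ((h j).sign.natAbs * k j)]
    have bmem : b ∈ mirror Λ := by
      show (fun j => (b j).natAbs) ∈ Λ
      refine hlow _ hk' _ fun j => ?_
      simp only [hb, Int.natAbs_mul, Int.natAbs_neg, Int.natAbs_natCast]
      have : (h j).sign.natAbs ≤ 1 := by
        rcases Int.lt_trichotomy (h j) 0 with hj | hj | hj
        · simp [Int.sign_eq_neg_one_of_neg hj]
        · simp [hj]
        · simp [Int.sign_eq_one_of_pos hj]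
      nlinarith [Nat.zero_le ((h j).sign.natAbs * k' j)]
    have ane : a ≠ b := by
      intro hab
      apply hne
      funext j
      have := congrFun hsub j
      rw [hab] at this
      simpa using this.symm
    have : dotZ a z ≡ dotZ b z [ZMOD (n : ℤ)] := by
      have h1 : dotZ a z - dotZ b z ≡ 0 [ZMOD (n : ℤ)] := by
        rw [← dot_sub, hsub]; exact heq
      have := h1.add_right (dotZ b z)
      rwa [sub_add_cancel, zero_add] at this
    exact PA a amem b bmem ane this
end

section
/- Let Λ ⊆ ℕ₀^d be a finite lower set, n ∈ ℕ, and z ∈ ℤ^d. If h·z ≢ h'·z (mod n) for all distinct h, h' ∈ Λ, then h·z ≢ 0 (mod n) for all h ∈ M(Λ)\{0}. Moreover, if Λ = B_k for some k ∈ ℕ₀^d, the two conditions are equivalent. -/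
open Pointwise

/-- The block-type set `B_k = {h ∈ ℕ₀^d : h ≤ k}`. -/
def blockSet {d : ℕ} (k : Fin d → ℕ) : Set (Fin d → ℕ) := {h | ∀ j, h j ≤ k j}


lemma dotZ_sub {d : ℕ} (a b z : Fin d → ℤ) :
    dotZ (a - b) z = dotZ a z - dotZ b z := by
  simp [dotZ, sub_mul, Finset.sum_sub_distrib]

theorem oneToOne_implies_plan0 {d : ℕ} (Λ : Set (Fin d → ℕ)) (hfin : Λ.Finite)
    (hlow : IsLower Λ) (n : ℕ) (hn : 0 < n) (z : Fin d → ℤ) :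
    ((∀ h ∈ Λ, ∀ h' ∈ Λ, h ≠ h' →
        ¬ (dotZ (natCast h) z ≡ dotZ (natCast h') z [ZMOD (n : ℤ)])) →
      ∀ h ∈ mirror Λ, h ≠ 0 → ¬ (dotZ h z ≡ 0 [ZMOD (n : ℤ)])) ∧
    (∀ k : Fin d → ℕ, Λ = blockSet k →
      ((∀ h ∈ Λ, ∀ h' ∈ Λ, h ≠ h' →
          ¬ (dotZ (natCast h) z ≡ dotZ (natCast h') z [ZMOD (n : ℤ)])) ↔
        (∀ h ∈ mirror Λ, h ≠ 0 → ¬ (dotZ h z ≡ 0 [ZMOD (n : ℤ)])))) := by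
  have main : ∀ (Λ : Set (Fin d → ℕ)), IsLower Λ →
      (∀ h ∈ Λ, ∀ h' ∈ Λ, h ≠ h' →
        ¬ (dotZ (natCast h) z ≡ dotZ (natCast h') z [ZMOD (n : ℤ)])) →
      ∀ h ∈ mirror Λ, h ≠ 0 → ¬ (dotZ h z ≡ 0 [ZMOD (n : ℤ)]) := by
    intro Λ hlow H h hm hne hmod
    have habs : (fun j => (h j).natAbs) ∈ Λ := hm
    set hp : Fin d → ℕ := fun j => (h j).toNat with hpdef
    set hq : Fin d → ℕ := fun j => (-h j).toNat with hqdef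
    have hpmem : hp ∈ Λ := hlow _ habs hp (fun j => by show (h j).toNat ≤ (h j).natAbs; omega)
    have hqmem : hq ∈ Λ := hlow _ habs hq (fun j => by show (-h j).toNat ≤ (h j).natAbs; omega)
    have hsub : natCast hp - natCast hq = h := by
      funext j; show ((h j).toNat : ℤ) - ((-h j).toNat : ℤ) = h j; omega
    have hne' : hp ≠ hq := by
      intro he
      apply hne
      funext j
      have := congrFun he j
      simp [hpdef, hqdef] at this
      simp; omega
    apply H hp hpmem hq hqmem hne'
    have : dotZ (natCast hp) z - dotZ (natCast hq) z ≡ 0 [ZMOD (n : ℤ)] := by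
      rw [← dotZ_sub, hsub]; exact hmod
    have := this.add_right (dotZ (natCast hq) z)
    simpa using this
  constructor
  · exact main Λ hlow
  · intro k hk
    constructor
    · exact main Λ hlow
    · intro H h hh h' hh' hne hmod
      subst hk
      set g : Fin d → ℤ := natCast h - natCast h' with hgdef
      have hgm : g ∈ mirror (blockSet k) := by
        intro j
        have h1 := hh j
        have h2 := hh' j
        simp [hgdef, natCast, blockSet]
        omega
      have hgne : g ≠ 0 := by
        intro he
        apply hne
        funext j
        have := congrFun he j
        simp [hgdef, natCast, sub_eq_zero] at this
        exact_mod_cast this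
      apply H g hgm hgne
      rw [hgdef, dotZ_sub]
      simpa using hmod.sub (Int.ModEq.refl (dotZ (natCast h') z))
end

section
/- Let Λ ⊆ ℕ₀^d be a finite lower set, n ∈ ℕ, and z ∈ ℤ^d. Then (n,z) is Plan B admissible for Λ if and only if (n,z) is Plan C admissible for Λ and 2 h·z ≢ 0 (mod n) for every nonzero extremal element h of Λ. Moreover, if n is odd, then (n,z) is Plan B admissible for Λ if and only if it is Plan C admissible for Λ. -/
open Pointwise

/-- `k` is an extremal element of `Λ`: `2k = h + h'` with `h, h' ∈ Λ` forces `h = h' = k`. -/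
def IsExtremal {d : ℕ} (Λ : Set (Fin d → ℕ)) (k : Fin d → ℕ) : Prop :=
  k ∈ Λ ∧ ∀ h ∈ Λ, ∀ h' ∈ Λ, h + h' = k + k → h = k ∧ h' = k

lemma dotZ_natCast_add {d : ℕ} (a b : Fin d → ℕ) (z : Fin d → ℤ) :
    dotZ (natCast (a + b)) z = dotZ (natCast a) z + dotZ (natCast b) z := by
  simp only [dotZ, natCast, Pi.add_apply, Nat.cast_add, add_mul, Finset.sum_add_distrib]

lemma dotZ_neg {d : ℕ} (s z : Fin d → ℤ) : dotZ (-s) z = -dotZ s z := by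
  simp [dotZ, Finset.sum_neg_distrib]

lemma signFlip_natCast {d : ℕ} (h : Fin d → ℕ) : IsSignFlip h (natCast h) := by
  intro j; simp [natCast]

lemma signFlip_neg_natCast {d : ℕ} (h : Fin d → ℕ) : IsSignFlip h (-natCast h) := by
  intro j; simp [natCast]

/-- Decomposition of a sign flip: `s·z = h·z - 2 g·z` with `g ≤ h`. -/
lemma flip_decomp {d : ℕ} (h : Fin d → ℕ) (s : Fin d → ℤ) (hs : IsSignFlip h s)
    (z : Fin d → ℤ) :
    ∃ g : Fin d → ℕ, (∀ j, g j ≤ h j) ∧ (s ≠ natCast h → g ≠ 0) ∧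
      dotZ s z = dotZ (natCast h) z - 2 * dotZ (natCast g) z := by
  refine ⟨fun j => if s j = (h j : ℤ) then 0 else h j, ?_, ?_, ?_⟩
  · intro j; by_cases hj : s j = (h j : ℤ) <;> simp [hj]
  · intro hne hg0
    apply hne
    funext j
    have := congrFun hg0 j
    simp only [Pi.zero_apply] at this
    by_cases hj : s j = (h j : ℤ)
    · exact hj
    · simp only [if_neg hj] at this
      have : s j = 0 := by
        have := hs j; omega
      simp [natCast, this] at hj ⊢
      omega
  · simp only [dotZ, natCast, Finset.mul_sum, ← Finset.sum_sub_distrib]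
    apply Finset.sum_congr rfl
    intro j _
    by_cases hj : s j = (h j : ℤ)
    · simp [hj]
    · have habs := hs j
      have hsj : s j = -(h j : ℤ) := by omega
      rw [if_neg hj, hsj]
      ring

lemma modEq_dvd {n a b : ℤ} : a ≡ b [ZMOD n] ↔ n ∣ b - a := Int.modEq_iff_dvd

theorem planB_iff_planC_extremal {d : ℕ} (Λ : Set (Fin d → ℕ)) (hfin : Λ.Finite)
    (hlow : IsLower Λ) (n : ℕ) (hn : 0 < n) (z : Fin d → ℤ) :
    (PlanB Λ n z ↔
      (PlanC Λ n z ∧ ∀ h : Fin d → ℕ, IsExtremal Λ h → h ≠ 0 →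
        ¬ (2 * dotZ (natCast h) z ≡ 0 [ZMOD (n : ℤ)]))) ∧
    (Odd n → (PlanB Λ n z ↔ PlanC Λ n z)) := by
  -- "Plan D": no nonzero g ∈ Λ has 2 g·z ≡ 0 (mod n)
  set D : Prop := ∀ g ∈ Λ, g ≠ (0 : Fin d → ℕ) →
      ¬ (2 * dotZ (natCast g) z ≡ 0 [ZMOD (n : ℤ)]) with hD
  have hBC : PlanB Λ n z → PlanC Λ n z := by
    intro hB h hmem h' hmem' hne s hs
    apply hB h hmem h' hmem' s hs
    intro heq
    apply hne
    funext j
    have := congrFun heq j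
    have h1 := hs j
    simp only [natCast] at this
    omega
  have hBD : PlanB Λ n z → D := by
    intro hB g hmem hg0 hmod
    have hne : -natCast g ≠ natCast g := by
      intro heq
      apply hg0
      funext j
      have := congrFun heq j
      simp only [Pi.neg_apply, natCast] at this
      simp only [Pi.zero_apply]
      omega
    apply hB g hmem g hmem (-natCast g) (signFlip_neg_natCast g) hne
    rw [dotZ_neg, modEq_dvd]
    rw [modEq_dvd] at hmod
    obtain ⟨c, hc⟩ := hmod
    exact ⟨-c, by linarith⟩
  have hCDB : PlanC Λ n z → D → PlanB Λ n z := by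
    intro hC hd h hmem h' hmem' s hs hne hmod
    by_cases heq : h = h'
    · subst heq
      obtain ⟨g, hgle, hg0, hdec⟩ := flip_decomp h s hs z
      have hgmem : g ∈ Λ := hlow h hmem g hgle
      apply hd g hgmem (hg0 hne)
      rw [modEq_dvd] at hmod ⊢
      obtain ⟨c, hc⟩ := hmod
      refine ⟨-c, ?_⟩
      rw [hdec] at hc
      linarith
    · exact hC h hmem h' hmem' heq s hs hmod
  have hDExt : D → ∀ h : Fin d → ℕ, IsExtremal Λ h → h ≠ 0 →
      ¬ (2 * dotZ (natCast h) z ≡ 0 [ZMOD (n : ℤ)]) := by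
    intro hd h hext hne
    exact hd h hext.1 hne
  have hCExtD : PlanC Λ n z →
      (∀ h : Fin d → ℕ, IsExtremal Λ h → h ≠ 0 →
        ¬ (2 * dotZ (natCast h) z ≡ 0 [ZMOD (n : ℤ)])) → D := by
    intro hC hext g hmem hg0 hmod
    by_cases hx : IsExtremal Λ g
    · exact hext g hx hg0 hmod
    · have : ¬ ∀ a ∈ Λ, ∀ a' ∈ Λ, a + a' = g + g → a = g ∧ a' = g := by
        intro hforall; exact hx ⟨hmem, hforall⟩
      push_neg at this
      obtain ⟨a, hamem, a', hamem', hsum, hnot⟩ := this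
      have haa' : a' ≠ a := by
        intro heq
        subst heq
        have : a' = g := by
          funext j
          have := congrFun hsum j
          simp only [Pi.add_apply] at this
          omega
        exact (by simpa [this] using hnot)
      apply hC a' hamem' a hamem haa' (-natCast a') (signFlip_neg_natCast a')
      rw [dotZ_neg, modEq_dvd]
      rw [modEq_dvd] at hmod
      obtain ⟨c, hc⟩ := hmod
      have hsum' : dotZ (natCast a) z + dotZ (natCast a') z = 2 * dotZ (natCast g) z := by
        have := dotZ_natCast_add a a' z
        rw [hsum, dotZ_natCast_add] at this
        linarith
      exact ⟨-c, by linarith⟩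
  have main : PlanB Λ n z ↔
      (PlanC Λ n z ∧ ∀ h : Fin d → ℕ, IsExtremal Λ h → h ≠ 0 →
        ¬ (2 * dotZ (natCast h) z ≡ 0 [ZMOD (n : ℤ)])) := by
    constructor
    · intro hB
      exact ⟨hBC hB, hDExt (hBD hB)⟩
    · rintro ⟨hC, hext⟩
      exact hCDB hC (hCExtD hC hext)
  refine ⟨main, fun hodd => ⟨hBC, fun hC => ?_⟩⟩
  apply main.mpr
  refine ⟨hC, fun h hext hne hmod => ?_⟩
  have hmem := hext.1
  have h0mem : (0 : Fin d → ℕ) ∈ Λ := hlow h hmem 0 (fun j => Nat.zero_le _)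
  apply hC h hmem 0 h0mem hne (natCast h) (signFlip_natCast h)
  have hz0 : dotZ (natCast (0 : Fin d → ℕ)) z = 0 := by simp [dotZ, natCast]
  rw [hz0, modEq_dvd]
  rw [modEq_dvd] at hmod
  have hdvd2 : (n : ℤ) ∣ 2 * dotZ (natCast h) z := by
    obtain ⟨c, hc⟩ := hmod; exact ⟨-c, by linarith⟩
  have hgcd : Int.gcd (n : ℤ) 2 = 1 := by
    have : Nat.Coprime n 2 := Nat.coprime_two_right.mpr hodd
    simpa [Int.gcd] using this
  have := Int.dvd_of_dvd_mul_right_of_gcd_one hdvd2 hgcd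
  obtain ⟨c, hc⟩ := this
  exact ⟨-c, by linarith⟩
end

section
/- Let k, n ∈ ℕ and z ∈ ℤ^d, and let Λ = S_{1,k} = {h ∈ ℕ₀^d : h_1 + … + h_d ≤ k} be the isotropic simplex set. The following are equivalent: (i) (n,z) is Plan A admissible for Λ; (ii) (n,z) is Plan B admissible for Λ; (iii) (n,z) is Plan C admissible for Λ and 2k z_j ≢ 0 (mod n) for all j = 1,…,d. Moreover, if n is odd, then (n,z) is Plan A admissible for Λ if and only if it is Plan C admissible for Λ. -/
open Pointwise

/-- The isotropic simplex set `S_{1,k} = {h ∈ ℕ₀^d : Σ_j h_j ≤ k}`. -/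
def simplex1 (d k : ℕ) : Set (Fin d → ℕ) := {h | ∑ j, h j ≤ k}


private lemma fill0 {d : ℕ} (w : Fin d → ℕ) (S : ℕ) (hS : S ≤ ∑ j, w j) :
    ∃ h : Fin d → ℕ, (∀ j, h j ≤ w j) ∧ ∑ j, h j = S := by
  induction S with
  | zero => exact ⟨fun _ => 0, fun j => Nat.zero_le _, by simp⟩
  | succ S ih =>
    obtain ⟨h, hle, hsum⟩ := ih (Nat.le_of_succ_le hS)
    have hlt : ∃ l, h l < w l := by
      by_contra hc
      push_neg at hc
      have : ∑ j, w j ≤ ∑ j, h j := Finset.sum_le_sum fun j _ => hc j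
      omega
    obtain ⟨l, hl⟩ := hlt
    refine ⟨Function.update h l (h l + 1), fun j => ?_, ?_⟩
    · rcases eq_or_ne j l with rfl | hj
      · simpa using hl
      · simpa [Function.update_of_ne hj] using hle j
    · rw [Finset.sum_update_of_mem (Finset.mem_univ l)]
      have h2 : ∑ j, h j = h l + ∑ x ∈ Finset.univ \ {l}, h x := by
        rw [← Finset.sum_update_of_mem (Finset.mem_univ l) h (h l)]
        simp
      omega

private lemma fill1 {d : ℕ} (w : Fin d → ℕ) (S : ℕ) (hS : S ≤ ∑ j, w j) (i : Fin d) :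
    ∃ h : Fin d → ℕ, (∀ j, h j ≤ w j) ∧ ∑ j, h j = S ∧ h i = min (w i) S := by
  set m := min (w i) S with hm
  have hsum' : ∑ j, Function.update w i 0 j = ∑ j, w j - w i := by
    rw [Finset.sum_update_of_mem (Finset.mem_univ i)]
    have h2 : ∑ j, w j = w i + ∑ x ∈ Finset.univ \ {i}, w x := by
      rw [← Finset.sum_update_of_mem (Finset.mem_univ i) w (w i)]
      simp
    omega
  have hwi : w i ≤ ∑ j, w j := Finset.single_le_sum (fun j _ => Nat.zero_le _) (Finset.mem_univ i)
  obtain ⟨h0, hle0, hsum0⟩ := fill0 (Function.update w i 0) (S - m) (by omega)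
  have h0i : h0 i = 0 := by have := hle0 i; simpa using this
  refine ⟨Function.update h0 i m, fun j => ?_, ?_, ?_⟩
  · rcases eq_or_ne j i with rfl | hj
    · simp [hm]
    · have := hle0 j
      simpa [Function.update_of_ne hj] using this
  · rw [Finset.sum_update_of_mem (Finset.mem_univ i)]
    have h2 : ∑ j, h0 j = h0 i + ∑ x ∈ Finset.univ \ {i}, h0 x := by
      rw [← Finset.sum_update_of_mem (Finset.mem_univ i) h0 (h0 i)]
      simp
    omega
  · simp [hm]

private lemma construct1 {d : ℕ} (k : ℕ) (v : Fin d → ℤ)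
    (h2k : ∑ j, (v j).natAbs ≤ 2 * k)
    (hPN : ∑ j, (v j).toNat ≤ ∑ j, (-(v j)).toNat) :
    ∃ h' : Fin d → ℕ, (∑ j, (v j + (h' j : ℤ)).natAbs ≤ k) ∧ (∑ j, h' j ≤ k) := by
  set P := ∑ j, (v j).toNat with hP
  set N := ∑ j, (-(v j)).toNat with hN
  have habs : ∑ j, (v j).natAbs = P + N := by
    rw [hP, hN, ← Finset.sum_add_distrib]
    exact Finset.sum_congr rfl fun j _ => by omega
  obtain ⟨h', hle, hsum⟩ := fill0 (fun j => (-(v j)).toNat) (P + N - k)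
    (show P + N - k ≤ ∑ j, (-(v j)).toNat by omega)
  refine ⟨h', ?_, by omega⟩
  have hptw : ∀ j, (v j + (h' j : ℤ)).natAbs + h' j = (v j).toNat + (-(v j)).toNat := by
    intro j; have := hle j; omega
  have : (∑ j, (v j + (h' j : ℤ)).natAbs) + ∑ j, h' j = P + N := by
    rw [hP, hN, ← Finset.sum_add_distrib, ← Finset.sum_add_distrib]
    exact Finset.sum_congr rfl fun j _ => hptw j
  omega

private lemma construct2 {d : ℕ} (k : ℕ) (g : Fin d → ℕ) (hg : ∑ j, g j ≤ k) (i : Fin d)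
    (hgi : 1 ≤ g i) (hik : g i < k) :
    ∃ (c : Fin d → ℤ) (h'' : Fin d → ℕ),
      (∑ j, (c j).natAbs ≤ k) ∧ (∑ j, h'' j ≤ k) ∧
      (fun j => (c j).natAbs) ≠ h'' ∧
      (∀ j, (h'' j : ℤ) - c j = 2 * (g j : ℤ)) := by
  set T := ∑ j, g j with hT
  have hsw : ∑ j, 2 * g j = 2 * T := by rw [hT, Finset.mul_sum]
  obtain ⟨h'', hle, hsum, hmin⟩ := fill1 (fun j => 2 * g j) (2 * T - k)
    (show 2 * T - k ≤ ∑ j, 2 * g j by omega) i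
  have hgiT : g i ≤ T := Finset.single_le_sum (fun j _ => Nat.zero_le _) (Finset.mem_univ i)
  refine ⟨fun j => (h'' j : ℤ) - 2 * (g j : ℤ), h'', ?_, by omega, ?_, fun j => by ring⟩
  · show (∑ j, ((h'' j : ℤ) - 2 * (g j : ℤ)).natAbs) ≤ k
    have hptw : ∀ j, ((h'' j : ℤ) - 2 * (g j : ℤ)).natAbs + h'' j = 2 * g j := by
      intro j; have := hle j; omega
    have : (∑ j, ((h'' j : ℤ) - 2 * (g j : ℤ)).natAbs) + ∑ j, h'' j = 2 * T := by
      rw [← hsw, ← Finset.sum_add_distrib]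
      exact Finset.sum_congr rfl fun j _ => hptw j
    omega
  · intro hEq
    have hpt : ∀ j, g j = h'' j := by
      intro j
      have h1 := congrFun hEq j
      have h2 := hle j
      simp only at h1 h2 ⊢
      omega
    have hTS : T = ∑ j, h'' j := by
      rw [hT]; exact Finset.sum_congr rfl fun j _ => hpt j
    have hii := hpt i
    have hmin' : h'' i = min (2 * g i) (2 * T - k) := hmin
    omega

private lemma mem_simplex {d k : ℕ} {h : Fin d → ℕ} : h ∈ simplex1 d k ↔ ∑ j, h j ≤ k :=
  Iff.rfl

private lemma mem_mirror {d k : ℕ} {a : Fin d → ℤ} :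
    a ∈ mirror (simplex1 d k) ↔ ∑ j, (a j).natAbs ≤ k := Iff.rfl

private lemma planA_to_planB {d k n : ℕ} {z : Fin d → ℤ}
    (hA : PlanA (simplex1 d k) n z) : PlanB (simplex1 d k) n z := by
  intro h hmem h' hmem' s hsf hne hcon
  have hs : s ∈ mirror (simplex1 d k) := by
    rw [mem_mirror]
    have : ∀ j, (s j).natAbs = h j := hsf
    calc ∑ j, (s j).natAbs = ∑ j, h j := Finset.sum_congr rfl fun j _ => this j
      _ ≤ k := hmem
  have hs' : natCast h' ∈ mirror (simplex1 d k) := by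
    rw [mem_mirror]
    calc ∑ j, ((h' j : ℤ)).natAbs = ∑ j, h' j := Finset.sum_congr rfl fun j _ => by simp
      _ ≤ k := hmem'
  exact hA s hs (natCast h') hs' hne hcon

private lemma planB_to_planC {d k n : ℕ} {z : Fin d → ℤ}
    (hB : PlanB (simplex1 d k) n z) : PlanC (simplex1 d k) n z := by
  intro h hmem h' hmem' hne s hsf hcon
  refine hB h hmem h' hmem' s hsf ?_ hcon
  intro heq
  apply hne
  funext j
  have := hsf j
  rw [heq] at this
  simpa [natCast] using this.symm

private lemma dot_single {d : ℕ} (j : Fin d) (x : ℤ) (z : Fin d → ℤ) :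
    (∑ l, (if l = j then x else 0) * z l) = x * z j := by
  rw [Finset.sum_eq_single j]
  · simp
  · intro b _ hb; simp [hb]
  · intro hj; exact absurd (Finset.mem_univ j) hj

private lemma planB_to_cond {d k n : ℕ} {z : Fin d → ℤ} (hk : 1 ≤ k)
    (hB : PlanB (simplex1 d k) n z) :
    ∀ j : Fin d, ¬ ((2 * (k : ℤ) * z j) ≡ 0 [ZMOD (n : ℤ)]) := by
  intro j hcon
  have hdvd : (n : ℤ) ∣ 2 * (k : ℤ) * z j := Int.modEq_zero_iff_dvd.mp hcon
  set e : Fin d → ℕ := fun l => if l = j then k else 0 with he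
  have hmem : e ∈ simplex1 d k := by
    rw [mem_simplex, he]
    simp
  set s : Fin d → ℤ := fun l => if l = j then -(k : ℤ) else 0 with hs
  have hsf : IsSignFlip e s := by
    intro l
    by_cases hl : l = j <;> simp [he, hs, hl]
  have hne : s ≠ natCast e := by
    intro heq
    have := congrFun heq j
    simp [he, hs, natCast] at this
    omega
  apply hB e hmem e hmem s hsf hne
  apply (Int.modEq_iff_dvd).mpr
  have e1 : dotZ s z = -(k : ℤ) * z j := dot_single j _ z
  have e2 : dotZ (natCast e) z = (k : ℤ) * z j := by
    have : natCast e = fun l => if l = j then (k : ℤ) else 0 := by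
      funext l; by_cases hl : l = j <;> simp [he, natCast, hl]
    rw [this]
    exact dot_single j _ z
  rw [e1, e2]
  have : (k : ℤ) * z j - -(k : ℤ) * z j = 2 * (k : ℤ) * z j := by ring
  rw [this]
  exact hdvd

private lemma keyB {d k n : ℕ} {z : Fin d → ℤ} (hB : PlanB (simplex1 d k) n z)
    (v : Fin d → ℤ) (hv : v ≠ 0) (h2k : ∑ j, (v j).natAbs ≤ 2 * k)
    (hPN : ∑ j, (v j).toNat ≤ ∑ j, (-(v j)).toNat)
    (hdvd : (n : ℤ) ∣ ∑ j, v j * z j) : False := by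
  obtain ⟨h', hck, hsk⟩ := construct1 k v h2k hPN
  set c : Fin d → ℤ := fun j => v j + (h' j : ℤ) with hc
  have hmemc : (fun j => (c j).natAbs) ∈ simplex1 d k := by
    rw [mem_simplex]; exact hck
  have hmemh' : h' ∈ simplex1 d k := hsk
  have hflip : IsSignFlip (fun j => (c j).natAbs) c := fun j => rfl
  have hne : c ≠ natCast h' := by
    intro heq
    obtain ⟨j, hj⟩ := Function.ne_iff.mp hv
    have := congrFun heq j
    simp only [hc, natCast] at this
    simp only [Pi.zero_apply] at hj
    omega
  apply hB _ hmemc h' hmemh' c hflip hne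
  apply Int.modEq_iff_dvd.mpr
  have : dotZ (natCast h') z - dotZ c z = -(∑ j, v j * z j) := by
    rw [dotZ, dotZ, ← Finset.sum_sub_distrib, ← Finset.sum_neg_distrib]
    refine Finset.sum_congr rfl fun j _ => ?_
    simp only [hc, natCast]
    ring
  rw [this]
  exact hdvd.neg_right

private lemma planB_to_planA {d k n : ℕ} {z : Fin d → ℤ}
    (hB : PlanB (simplex1 d k) n z) : PlanA (simplex1 d k) n z := by
  intro a hma b hmb hne hcon
  set v : Fin d → ℤ := fun j => b j - a j with hv
  have hvne : v ≠ 0 := by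
    intro heq
    apply hne
    funext j
    have := congrFun heq j
    simp only [hv, Pi.zero_apply] at this
    omega
  have hvd : (n : ℤ) ∣ ∑ j, v j * z j := by
    have h1 := Int.modEq_iff_dvd.mp hcon
    have : ∑ j, v j * z j = dotZ b z - dotZ a z := by
      rw [dotZ, dotZ, ← Finset.sum_sub_distrib]
      exact Finset.sum_congr rfl fun j _ => by simp only [hv]; ring
    rw [this]
    exact h1
  have h2k : ∑ j, (v j).natAbs ≤ 2 * k := by
    rw [mem_mirror] at hma hmb
    calc ∑ j, (v j).natAbs ≤ ∑ j, ((b j).natAbs + (a j).natAbs) :=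
          Finset.sum_le_sum fun j _ => by simp only [hv]; omega
      _ = (∑ j, (b j).natAbs) + ∑ j, (a j).natAbs := Finset.sum_add_distrib
      _ ≤ 2 * k := by omega
  rcases le_total (∑ j, (v j).toNat) (∑ j, (-(v j)).toNat) with hle | hle
  · exact keyB hB v hvne h2k hle hvd
  · refine keyB hB (fun j => -(v j)) ?_ ?_ ?_ ?_
    · intro heq
      apply hvne
      funext j
      have := congrFun heq j
      simp only [Pi.zero_apply] at this ⊢
      omega
    · calc ∑ j, (-(v j)).natAbs = ∑ j, (v j).natAbs :=
            Finset.sum_congr rfl fun j _ => by omega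
        _ ≤ 2 * k := h2k
    · have : ∀ j, (-(-(v j))).toNat = (v j).toNat := fun j => by omega
      calc ∑ j, (-(v j)).toNat ≤ ∑ j, (v j).toNat := hle
        _ = ∑ j, (-(-(v j))).toNat := Finset.sum_congr rfl fun j _ => (this j).symm
    · have : ∑ j, -(v j) * z j = -(∑ j, v j * z j) := by
        rw [← Finset.sum_neg_distrib]
        exact Finset.sum_congr rfl fun j _ => by ring
      rw [this]
      exact hvd.neg_right

private lemma planCcond_to_planB {d k n : ℕ} {z : Fin d → ℤ}
    (hC : PlanC (simplex1 d k) n z)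
    (hcond : ∀ j : Fin d, ¬ ((2 * (k : ℤ) * z j) ≡ 0 [ZMOD (n : ℤ)])) :
    PlanB (simplex1 d k) n z := by
  intro h hmem h' hmem' s hsf hne hcon
  by_cases hhh : h = h'
  · subst hhh
    set g : Fin d → ℕ := fun j => if s j = (h j : ℤ) then 0 else h j with hg
    have hsg : ∀ j, (h j : ℤ) - s j = 2 * (g j : ℤ) := by
      intro j
      have h1 := hsf j
      by_cases hj : s j = (h j : ℤ) <;> simp only [hg, hj, if_true, if_false] <;> push_cast <;> omega
    have hgle : ∀ j, g j ≤ h j := by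
      intro j; simp only [hg]; split <;> omega
    have hgsum : ∑ j, g j ≤ k := by
      rw [mem_simplex] at hmem
      calc ∑ j, g j ≤ ∑ j, h j := Finset.sum_le_sum fun j _ => hgle j
        _ ≤ k := hmem
    have hdvd : (n : ℤ) ∣ ∑ j, 2 * (g j : ℤ) * z j := by
      have h1 := Int.modEq_iff_dvd.mp hcon
      have h2 : dotZ (natCast h) z - dotZ s z = ∑ j, 2 * (g j : ℤ) * z j := by
        rw [dotZ, dotZ, ← Finset.sum_sub_distrib]
        refine Finset.sum_congr rfl fun j _ => ?_
        rw [← sub_mul]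
        rw [show natCast h j - s j = 2 * (g j : ℤ) from hsg j]
      rw [← h2]
      exact h1
    have hex : ∃ i, 1 ≤ g i := by
      obtain ⟨j, hj⟩ := Function.ne_iff.mp hne
      refine ⟨j, ?_⟩
      have h1 := hsf j
      have h2 : s j ≠ (h j : ℤ) := hj
      simp only [hg, h2, if_false]
      omega
    obtain ⟨i, hi⟩ := hex
    by_cases hik : g i < k
    · obtain ⟨c, h'', hck, hsk, hne2, heqd⟩ := construct2 k g hgsum i hi hik
      refine hC (fun j => (c j).natAbs) hck h'' hsk hne2 c (fun j => rfl) ?_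
      apply Int.modEq_iff_dvd.mpr
      have : dotZ (natCast h'') z - dotZ c z = ∑ j, 2 * (g j : ℤ) * z j := by
        rw [dotZ, dotZ, ← Finset.sum_sub_distrib]
        refine Finset.sum_congr rfl fun j _ => ?_
        rw [← sub_mul]
        rw [show natCast h'' j - c j = 2 * (g j : ℤ) from heqd j]
      rw [this]
      exact hdvd
    · have hgi : g i = k := by
        have h1 : g i ≤ ∑ j, g j :=
          Finset.single_le_sum (fun j _ => Nat.zero_le _) (Finset.mem_univ i)
        omega
      have hzero : ∀ j, j ≠ i → g j = 0 := by
        intro j hj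
        have h1 : g i + g j ≤ ∑ l, g l := by
          have := Finset.add_sum_erase Finset.univ g (Finset.mem_univ i)
          have h2 : g j ≤ ∑ l ∈ Finset.univ.erase i, g l :=
            Finset.single_le_sum (fun l _ => Nat.zero_le _)
              (Finset.mem_erase.mpr ⟨hj, Finset.mem_univ j⟩)
          omega
        omega
      apply hcond i
      apply Int.modEq_zero_iff_dvd.mpr
      have : ∑ j, 2 * (g j : ℤ) * z j = 2 * (k : ℤ) * z i := by
        rw [Finset.sum_eq_single i]
        · rw [hgi]
        · intro b _ hb
          rw [hzero b hb]
          ring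
        · intro hi'; exact absurd (Finset.mem_univ i) hi'
      rw [← this]
      exact hdvd
  · exact hC h hmem h' hmem' hhh s hsf hcon

private lemma odd_cond {d k n : ℕ} {z : Fin d → ℤ} (hk : 1 ≤ k) (hodd : Odd n)
    (hC : PlanC (simplex1 d k) n z) :
    ∀ j : Fin d, ¬ ((2 * (k : ℤ) * z j) ≡ 0 [ZMOD (n : ℤ)]) := by
  intro j hcon
  have hdvd2 : (n : ℤ) ∣ 2 * ((k : ℤ) * z j) := by
    have := Int.modEq_zero_iff_dvd.mp hcon
    have h2 : 2 * ((k : ℤ) * z j) = 2 * (k : ℤ) * z j := by ring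
    rw [h2]
    exact this
  have hco : IsCoprime (n : ℤ) 2 := by
    rw [Int.isCoprime_iff_gcd_eq_one]
    have h1 : Nat.Coprime n 2 := hodd.coprime_two_right
    simpa [Int.gcd] using h1
  have hdvd : (n : ℤ) ∣ (k : ℤ) * z j := hco.dvd_of_dvd_mul_left hdvd2
  set e : Fin d → ℕ := fun l => if l = j then k else 0 with he
  have hmem : e ∈ simplex1 d k := by rw [mem_simplex, he]; simp
  have hmem0 : (fun _ : Fin d => 0) ∈ simplex1 d k := by
    rw [mem_simplex]; simp
  have hne : e ≠ fun _ => 0 := by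
    intro heq
    have := congrFun heq j
    simp [he] at this
    omega
  have hflip : IsSignFlip e (natCast e) := fun l => by simp [natCast]
  apply hC e hmem (fun _ => 0) hmem0 hne (natCast e) hflip
  have e2 : dotZ (natCast e) z = (k : ℤ) * z j := by
    have : natCast e = fun l => if l = j then (k : ℤ) else 0 := by
      funext l; by_cases hl : l = j <;> simp [he, natCast, hl]
    rw [this]
    exact dot_single j _ z
  have e0 : dotZ (natCast (fun _ : Fin d => 0)) z = 0 := by
    simp [dotZ, natCast]
  rw [e2, e0]
  exact Int.modEq_zero_iff_dvd.mpr hdvd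

theorem simplex_plans_equiv {d : ℕ} (k n : ℕ) (hk : 1 ≤ k) (hn : 1 ≤ n)
    (z : Fin d → ℤ) :
    (PlanA (simplex1 d k) n z ↔ PlanB (simplex1 d k) n z) ∧
    (PlanB (simplex1 d k) n z ↔
      (PlanC (simplex1 d k) n z ∧
        ∀ j : Fin d, ¬ ((2 * (k : ℤ) * z j) ≡ 0 [ZMOD (n : ℤ)]))) ∧
    (Odd n → (PlanA (simplex1 d k) n z ↔ PlanC (simplex1 d k) n z)) := by
  refine ⟨⟨planA_to_planB, planB_to_planA⟩, ?_, ?_⟩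
  · constructor
    · intro hB
      exact ⟨planB_to_planC hB, planB_to_cond hk hB⟩
    · rintro ⟨hC, hcond⟩
      exact planCcond_to_planB hC hcond
  · intro hodd
    constructor
    · intro hA
      exact planB_to_planC (planA_to_planB hA)
    · intro hC
      exact planB_to_planA (planCcond_to_planB hC (odd_cond hk hodd hC))
end

section
/- Let Λ ⊆ ℕ₀^d be a finite lower set. Then #M(Λ) = Σ_{k ∈ Λ} 2^{|k|_0} ≤ #(Λ ⊕ Λ), and equality #M(Λ) = #(Λ ⊕ Λ) holds if and only if Λ = B_k for some k ∈ ℕ₀^d. -/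
open Pointwise

section MirrorAux

variable {d : ℕ}

/-- The componentwise "fold" map `ℤ^d → ℕ^d` sending `x` to `2|x|` if `x ≥ 0`
and `2|x| - 1` if `x < 0`. -/
def phiM (h : Fin d → ℤ) : Fin d → ℕ :=
  fun j => if 0 ≤ h j then 2 * (h j).natAbs else 2 * (h j).natAbs - 1

lemma phiM_injective : Function.Injective (phiM (d := d)) := by
  intro x y hxy
  funext j
  have h := congrFun hxy j
  simp only [phiM] at h
  split_ifs at h <;> omega

/-- The set of sign flips of `k`. -/
def signsF (k : Fin d → ℕ) : Finset (Fin d → ℤ) :=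
  Fintype.piFinset fun j => ({(k j : ℤ), -(k j : ℤ)} : Finset ℤ)

lemma mem_signsF {k : Fin d → ℕ} {h : Fin d → ℤ} :
    h ∈ signsF k ↔ ∀ j, h j = (k j : ℤ) ∨ h j = -(k j : ℤ) := by
  simp [signsF, Fintype.mem_piFinset]

lemma natAbs_of_mem_signsF {k : Fin d → ℕ} {h : Fin d → ℤ}
    (hh : h ∈ signsF k) (j : Fin d) : (h j).natAbs = k j := by
  rcases mem_signsF.mp hh j with h1 | h1 <;> rw [h1] <;> simp

lemma signsF_card (k : Fin d → ℕ) :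
    (signsF k).card = 2 ^ (Finset.univ.filter fun j => k j ≠ 0).card := by
  rw [signsF, Fintype.card_piFinset]
  have hcard : ∀ j, ({(k j : ℤ), -(k j : ℤ)} : Finset ℤ).card = if k j ≠ 0 then 2 else 1 := by
    intro j
    rcases eq_or_ne (k j) 0 with h | h
    · simp [h]
    · rw [if_pos h, Finset.card_pair (by omega)]
  rw [Finset.prod_congr rfl fun j _ => hcard j, Finset.prod_ite, Finset.prod_const,
    Finset.prod_const_one, mul_one]

lemma mirror_eq_biUnion (Λ : Set (Fin d → ℕ)) (hfin : Λ.Finite) :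
    mirror Λ = ↑(hfin.toFinset.biUnion signsF) := by
  ext h
  simp only [Finset.coe_biUnion, Set.mem_iUnion, Finset.mem_coe, Set.Finite.mem_toFinset,
    mirror, Set.mem_setOf_eq]
  constructor
  · intro hh
    exact ⟨fun j => (h j).natAbs, hh, mem_signsF.mpr fun j => Int.natAbs_eq (h j)⟩
  · rintro ⟨k, hk, hs⟩
    have : (fun j => (h j).natAbs) = k := funext fun j => natAbs_of_mem_signsF hs j
    rw [this]; exact hk

lemma mirror_ncard_eq (Λ : Set (Fin d → ℕ)) (hfin : Λ.Finite) :
    (mirror Λ).ncard =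
      ∑ k ∈ hfin.toFinset, 2 ^ (Finset.univ.filter (fun j => k j ≠ 0)).card := by
  have hdis : ∀ x ∈ hfin.toFinset, ∀ y ∈ hfin.toFinset, x ≠ y →
      Disjoint (signsF x) (signsF y) := by
    intro x _ y _ hxy
    rw [Finset.disjoint_left]
    intro h hhx hhy
    exact hxy (funext fun j => (natAbs_of_mem_signsF hhx j).symm.trans
      (natAbs_of_mem_signsF hhy j))
  rw [mirror_eq_biUnion Λ hfin, Set.ncard_coe_finset, Finset.card_biUnion hdis]
  exact Finset.sum_congr rfl fun k _ => signsF_card k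

lemma phiM_mem {Λ : Set (Fin d → ℕ)} (hlow : IsLower Λ) {h : Fin d → ℤ}
    (hh : h ∈ mirror Λ) : phiM h ∈ Λ + Λ := by
  have ha : (fun j => (h j).natAbs) ∈ Λ := hh
  set b : Fin d → ℕ := fun j => if 0 ≤ h j then (h j).natAbs else (h j).natAbs - 1 with hb
  have hbΛ : b ∈ Λ := hlow _ ha b fun j => by simp only [hb]; split_ifs <;> omega
  have hab : phiM h = (fun j => (h j).natAbs) + b := by
    funext j
    simp only [phiM, Pi.add_apply, hb]
    split_ifs with hj <;> omega
  rw [hab]; exact Set.add_mem_add ha hbΛ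

lemma block_surj (K : Fin d → ℕ) :
    blockSet K + blockSet K ⊆ phiM '' mirror (blockSet K) := by
  intro v hv
  rw [Set.mem_add] at hv
  obtain ⟨a, ha, b, hb, hab⟩ := hv
  refine ⟨fun j => if v j % 2 = 0 then ((v j / 2 : ℕ) : ℤ) else -((v j / 2 : ℕ) + 1 : ℤ), ?_, ?_⟩
  · intro j
    have h1 : a j ≤ K j := ha j
    have h2 : b j ≤ K j := hb j
    have h3 : a j + b j = v j := congrFun hab j
    dsimp only
    split_ifs with hp <;> omega
  · funext j
    have h3 : a j + b j = v j := congrFun hab j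
    simp only [phiM]
    split_ifs <;> omega

lemma not_block_gap (Λ : Set (Fin d → ℕ)) (hfin : Λ.Finite)
    (hne : Λ.Nonempty) (hlow : IsLower Λ) (hnb : ∀ k : Fin d → ℕ, Λ ≠ blockSet k) :
    ∃ v ∈ Λ + Λ, v ∉ phiM '' mirror Λ := by
  classical
  set K : Fin d → ℕ := fun j => hfin.toFinset.sup fun k => k j with hK
  have hsub : Λ ⊆ blockSet K := fun k hk j =>
    Finset.le_sup (f := fun k => k j) (hfin.mem_toFinset.mpr hk)
  obtain ⟨m₀, hm₀B, hm₀Λ⟩ := Set.exists_of_ssubset (hsub.ssubset_of_ne (hnb K))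
  set S : Finset (Fin d → ℕ) :=
    (Fintype.piFinset fun j => Finset.range (K j + 1)).filter (fun m => m ∉ Λ) with hS
  have hmemS : ∀ m : Fin d → ℕ, m ∈ S ↔ (∀ j, m j ≤ K j) ∧ m ∉ Λ := by
    intro m
    simp [hS, Fintype.mem_piFinset, Nat.lt_succ_iff]
  obtain ⟨m, hmS, hmin⟩ := S.exists_min_image (fun m => ∑ j, m j)
    ⟨m₀, (hmemS m₀).mpr ⟨hm₀B, hm₀Λ⟩⟩
  obtain ⟨hmK, hmΛ⟩ := (hmemS m).mp hmS
  have hstep : ∀ h : Fin d → ℕ, (∀ j, h j ≤ m j) → h ≠ m → h ∈ Λ := by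
    intro h hle hneq
    by_contra hh
    have hhS : h ∈ S := (hmemS h).mpr ⟨fun j => le_trans (hle j) (hmK j), hh⟩
    have h1 := hmin h hhS
    obtain ⟨j, hj⟩ := Function.ne_iff.mp hneq
    have h2 : ∑ j, h j < ∑ j, m j :=
      Finset.sum_lt_sum (fun i _ => hle i) ⟨j, Finset.mem_univ j, lt_of_le_of_ne (hle j) hj⟩
    omega
  have hzero : (0 : Fin d → ℕ) ∈ Λ := by
    obtain ⟨c, hc⟩ := hne
    exact hlow c hc 0 fun j => Nat.zero_le _
  have hmne : m ≠ 0 := fun h => hmΛ (h ▸ hzero)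
  obtain ⟨i, hi0⟩ := Function.ne_iff.mp hmne
  have hi : m i ≠ 0 := by simpa using hi0
  have : ∃ j, j ≠ i ∧ m j ≠ 0 := by
    by_contra hcon
    push_neg at hcon
    have hLne : hfin.toFinset.Nonempty := by
      obtain ⟨c, hc⟩ := hne; exact ⟨c, hfin.mem_toFinset.mpr hc⟩
    obtain ⟨c, hcL, hKc⟩ := Finset.exists_mem_eq_sup hfin.toFinset hLne (fun k => k i)
    have hmc : ∀ l, m l ≤ c l := by
      intro l
      rcases eq_or_ne l i with rfl | hli
      · calc m l ≤ K l := hmK l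
          _ = c l := hKc
      · simp [hcon l hli]
    exact hmΛ (hlow c (hfin.mem_toFinset.mp hcL) m hmc)
  obtain ⟨j, hji, hj⟩ := this
  set a : Fin d → ℕ := Function.update m i (m i - 1) with ha
  set b : Fin d → ℕ := Function.update m j (m j - 1) with hb
  have hai : a i = m i - 1 := by rw [ha, Function.update_self]
  have hbj : b j = m j - 1 := by rw [hb, Function.update_self]
  have hbi : b i = m i := by rw [hb, Function.update_of_ne (fun h => hji h.symm)]
  have haj : a j = m j := by rw [ha, Function.update_of_ne hji]
  have hal : ∀ l, l ≠ i → a l = m l := fun l hl => by rw [ha, Function.update_of_ne hl]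
  have hbl : ∀ l, l ≠ j → b l = m l := fun l hl => by rw [hb, Function.update_of_ne hl]
  have haΛ : a ∈ Λ := by
    refine hstep a (fun l => by
      rcases eq_or_ne l i with rfl | hl
      · rw [hai]; omega
      · rw [hal l hl]) ?_
    intro hEq
    have h2 := congrFun hEq i
    rw [hai] at h2
    omega
  have hbΛ : b ∈ Λ := by
    refine hstep b (fun l => by
      rcases eq_or_ne l j with rfl | hl
      · rw [hbj]; omega
      · rw [hbl l hl]) ?_
    intro hEq
    have h2 := congrFun hEq j
    rw [hbj] at h2
    omega
  refine ⟨a + b, Set.add_mem_add haΛ hbΛ, ?_⟩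
  rintro ⟨h, hh, hphi⟩
  apply hmΛ
  have habs : (fun l => (h l).natAbs) = m := by
    funext l
    have he := congrFun hphi l
    simp only [phiM, Pi.add_apply] at he
    by_cases hli : l = i
    · subst hli
      rw [hai, hbi] at he
      split_ifs at he <;> omega
    · by_cases hlj : l = j
      · subst hlj
        rw [haj, hbj] at he
        split_ifs at he <;> omega
      · rw [hal l hli, hbl l hlj] at he
        split_ifs at he <;> omega
  exact habs ▸ hh

end MirrorAux

theorem mirror_card_le_sumset_card {d : ℕ} (Λ : Set (Fin d → ℕ)) (hfin : Λ.Finite)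
    (hne : Λ.Nonempty) (hlow : IsLower Λ) :
    (mirror Λ).ncard =
      ∑ k ∈ hfin.toFinset, 2 ^ (Finset.univ.filter (fun j => k j ≠ 0)).card ∧
    (mirror Λ).ncard ≤ (Λ + Λ).ncard ∧
    ((mirror Λ).ncard = (Λ + Λ).ncard ↔ ∃ k : Fin d → ℕ, Λ = blockSet k) := by
  have hsumfin : (Λ + Λ).Finite := hfin.add hfin
  have himgsub : phiM '' mirror Λ ⊆ Λ + Λ := by
    rintro v ⟨h, hh, rfl⟩
    exact phiM_mem hlow hh
  have himg : (phiM '' mirror Λ).ncard = (mirror Λ).ncard :=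
    Set.ncard_image_of_injOn (phiM_injective.injOn)
  refine ⟨mirror_ncard_eq Λ hfin, ?_, ?_⟩
  · rw [← himg]
    exact Set.ncard_le_ncard himgsub hsumfin
  · constructor
    · intro heq
      by_contra hnb
      push_neg at hnb
      obtain ⟨v, hv1, hv2⟩ := not_block_gap Λ hfin hne hlow hnb
      have hss : phiM '' mirror Λ ⊂ Λ + Λ :=
        (Set.ssubset_iff_of_subset himgsub).mpr ⟨v, hv1, hv2⟩
      have hlt := Set.ncard_lt_ncard hss hsumfin
      rw [himg] at hlt
      omega
    · rintro ⟨K, rfl⟩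
      have himg2 : phiM '' mirror (blockSet K) = blockSet K + blockSet K :=
        subset_antisymm himgsub (block_surj K)
      rw [← himg, himg2]
end

section
/- Let Λ ⊆ ℕ₀^d be a finite lower set. Then the map h ↦ 2|h| − 1_{h<0}, sending h ∈ ℤ^d to the vector with j-th component 2|h_j| − [h_j < 0], is an injection from M(Λ) into Λ ⊕ Λ. -/
open Pointwise

theorem mirror_embeds_into_sumset {d : ℕ} (Λ : Set (Fin d → ℕ)) (hfin : Λ.Finite)
    (hlow : IsLower Λ) :
    Set.MapsTo (fun h : Fin d → ℤ => fun j => 2 * (h j).natAbs - (if h j < 0 then 1 else 0))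
      (mirror Λ) (Λ + Λ) ∧
    Set.InjOn (fun h : Fin d → ℤ => fun j => 2 * (h j).natAbs - (if h j < 0 then 1 else 0))
      (mirror Λ) := by
  constructor
  · intro h hh
    have ha : (fun j => (h j).natAbs) ∈ Λ := hh
    have hb : (fun j => (h j).natAbs - (if h j < 0 then 1 else 0)) ∈ Λ := by
      apply hlow _ ha
      intro j
      omega
    refine Set.mem_add.mpr ⟨_, ha, _, hb, ?_⟩
    funext j
    simp only [Pi.add_apply]
    by_cases hj : h j < 0
    · have : (h j).natAbs ≥ 1 := by omega
      simp [hj]; omega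
    · simp [hj]; omega
  · intro a ha b hb hab
    funext j
    have := congrFun hab j
    simp only at this
    by_cases h1 : a j < 0 <;> by_cases h2 : b j < 0 <;>
      simp [h1, h2] at this <;> omega
end

section
/- Let Λ ⊆ ℕ₀^d be a finite nonempty set, n ∈ ℕ, and z ∈ ℤ^d. If (n,z) is Plan B admissible for Λ, then n ≥ 2#Λ + ε_{Λ,0}, where ε_{Λ,0} = 1 if 0 ∉ Λ and ε_{Λ,0} = −1 if 0 ∈ Λ. -/
open Pointwise

theorem planB_lower_bound {d : ℕ} (Λ : Set (Fin d → ℕ)) (hfin : Λ.Finite)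
    (hne : Λ.Nonempty) (n : ℕ) (hn : 0 < n) (z : Fin d → ℤ) (hB : PlanB Λ n z) :
    ((0 : Fin d → ℕ) ∈ Λ → 2 * (Λ.ncard : ℤ) - 1 ≤ (n : ℤ)) ∧
    ((0 : Fin d → ℕ) ∉ Λ → 2 * (Λ.ncard : ℤ) + 1 ≤ (n : ℤ)) := by
  haveI : NeZero n := ⟨hn.ne'⟩
  classical
  set F := hfin.toFinset with hF
  have hcard : (Λ.ncard : ℤ) = (F.card : ℤ) := by
    rw [Set.ncard_eq_toFinset_card Λ hfin]
  set φ : (Fin d → ℕ) → ZMod n := fun h => ((dotZ (natCast h) z : ℤ) : ZMod n) with hφ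
  -- dotZ of negation
  have hneg : ∀ h : Fin d → ℕ, dotZ (fun j => -((h j : ℤ))) z = -dotZ (natCast h) z := by
    intro h
    simp [dotZ, natCast, neg_mul, Finset.sum_neg_distrib]
  have hsf1 : ∀ h : Fin d → ℕ, IsSignFlip h (natCast h) := by
    intro h j; simp [natCast]
  have hsf2 : ∀ h : Fin d → ℕ, IsSignFlip h (fun j => -((h j : ℤ))) := by
    intro h j; simp
  have hnatinj : ∀ h h' : Fin d → ℕ, natCast h = natCast h' → h = h' := by
    intro h h' he; funext j
    have := congrFun he j
    simpa [natCast] using this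
  -- key: translate Plan B into ZMod equalities
  have key : ∀ h ∈ Λ, ∀ h' ∈ Λ, ∀ s : Fin d → ℤ, IsSignFlip h s → s ≠ natCast h' →
      ((dotZ s z : ℤ) : ZMod n) ≠ ((dotZ (natCast h') z : ℤ) : ZMod n) := by
    intro h hh h' hh' s hs hne' he
    exact hB h hh h' hh' s hs hne' (by rwa [ZMod.intCast_eq_intCast_iff] at he)
  have inj : ∀ h ∈ Λ, ∀ h' ∈ Λ, h ≠ h' → φ h ≠ φ h' := by
    intro h hh h' hh' hne'
    exact key h hh h' hh' (natCast h) (hsf1 h) (fun he => hne' (hnatinj _ _ he))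
  have mixed : ∀ h ∈ Λ, ∀ h' ∈ Λ, ¬(h = 0 ∧ h' = 0) → -φ h ≠ φ h' := by
    intro h hh h' hh' hne' he
    refine key h hh h' hh' (fun j => -((h j : ℤ))) (hsf2 h) ?_ ?_
    · intro hcontra
      apply hne'
      constructor <;> funext j <;>
      · have := congrFun hcontra j
        simp only [natCast] at this
        simp only [Pi.zero_apply]
        omega
    · rw [hneg]
      push_cast
      exact he
  set A : Finset (ZMod n) := F.image φ with hA
  set B : Finset (ZMod n) := F.image (fun h => -φ h) with hB2
  have hmemF : ∀ h, h ∈ F ↔ h ∈ Λ := by intro h; simp [hF]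
  have hAcard : A.card = F.card := by
    apply Finset.card_image_of_injOn
    intro a ha b hb hab
    by_contra hne'
    exact inj a ((hmemF a).1 ha) b ((hmemF b).1 hb) hne' hab
  have hBcard : B.card = F.card := by
    apply Finset.card_image_of_injOn
    intro a ha b hb hab
    by_contra hne'
    exact inj a ((hmemF a).1 ha) b ((hmemF b).1 hb) hne' (by rwa [neg_inj] at hab)
  have huniv : (A ∪ B).card ≤ n := by
    calc (A ∪ B).card ≤ Fintype.card (ZMod n) := Finset.card_le_univ _
    _ = n := ZMod.card n
  constructor
  · intro h0
    -- A ∩ B ⊆ {φ 0}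
    have hsub : A ∩ B ⊆ {φ 0} := by
      intro x hx
      rw [Finset.mem_inter] at hx
      obtain ⟨hxA, hxB⟩ := hx
      obtain ⟨a, ha, rfl⟩ := Finset.mem_image.1 hxA
      obtain ⟨b, hb, hba⟩ := Finset.mem_image.1 hxB
      by_cases hz : b = 0 ∧ a = 0
      · simp [hz.2]
      · exact absurd hba (mixed b ((hmemF b).1 hb) a ((hmemF a).1 ha) hz)
    have hinter : (A ∩ B).card ≤ 1 := le_trans (Finset.card_le_card hsub) (by simp)
    have := Finset.card_union_add_card_inter A B
    have h2 : 2 * F.card - 1 ≤ (A ∪ B).card := by omega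
    rw [hcard]
    omega
  · intro h0
    have hdisj : Disjoint A B := by
      rw [Finset.disjoint_left]
      intro x hxA hxB
      obtain ⟨a, ha, rfl⟩ := Finset.mem_image.1 hxA
      obtain ⟨b, hb, hba⟩ := Finset.mem_image.1 hxB
      refine mixed b ((hmemF b).1 hb) a ((hmemF a).1 ha) ?_ hba
      rintro ⟨-, rfl⟩; exact h0 ((hmemF 0).1 ha)
    have h0A : (0 : ZMod n) ∉ A ∪ B := by
      intro hx
      rw [Finset.mem_union] at hx
      rcases hx with hx | hx
      · obtain ⟨a, ha, hra⟩ := Finset.mem_image.1 hx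
        have haΛ := (hmemF a).1 ha
        refine mixed a haΛ a haΛ ?_ ?_
        · rintro ⟨rfl, -⟩; exact h0 haΛ
        · rw [hra]; simp
      · obtain ⟨a, ha, hra⟩ := Finset.mem_image.1 hx
        have haΛ := (hmemF a).1 ha
        refine mixed a haΛ a haΛ ?_ ?_
        · rintro ⟨rfl, -⟩; exact h0 haΛ
        · have : φ a = 0 := by
            have := hra; rwa [neg_eq_zero] at this
          simp [this]
    have hins : (insert (0 : ZMod n) (A ∪ B)).card = (A ∪ B).card + 1 :=
      Finset.card_insert_of_notMem h0A
    have huniv2 : (insert (0 : ZMod n) (A ∪ B)).card ≤ n := by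
      calc _ ≤ Fintype.card (ZMod n) := Finset.card_le_univ _
      _ = n := ZMod.card n
    have := Finset.card_union_of_disjoint hdisj
    rw [hcard]
    omega
end

section
/- Let Λ ⊆ ℕ₀^d be a finite nonempty set, n ∈ ℕ, and z ∈ ℤ^d. If (n,z) is Plan C admissible for Λ, then n ≥ 2#Λ − 2. -/
open Pointwise

theorem planC_lower_bound {d : ℕ} (Λ : Set (Fin d → ℕ)) (hfin : Λ.Finite)
    (hne : Λ.Nonempty) (n : ℕ) (hn : 0 < n) (z : Fin d → ℤ) (hC : PlanC Λ n z) :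
    2 * (Λ.ncard : ℤ) - 2 ≤ (n : ℤ) := by

  haveI : NeZero n := ⟨hn.ne'⟩
  classical
  set F := hfin.toFinset with hF
  have hmemF : ∀ h, h ∈ F ↔ h ∈ Λ := fun h => hfin.mem_toFinset
  set f : (Fin d → ℕ) → ZMod n := fun h => ((dotZ (natCast h) z : ℤ) : ZMod n) with hf
  have hflip : ∀ h : Fin d → ℕ, IsSignFlip h (natCast h) := by
    intro h j; simp [natCast, IsSignFlip]
  have hflipneg : ∀ h : Fin d → ℕ, IsSignFlip h (fun j => -(natCast h j)) := by
    intro h j; simp [natCast, IsSignFlip]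
  have hdotneg : ∀ h : Fin d → ℕ, dotZ (fun j => -(natCast h j)) z
      = -(dotZ (natCast h) z) := by
    intro h; simp [dotZ, natCast, neg_mul, Finset.sum_neg_distrib]
  have hinj : Set.InjOn f ↑F := by
    intro a ha b hb hab
    by_contra hne'
    exact hC a ((hmemF a).1 ha) b ((hmemF b).1 hb) hne' (natCast a) (hflip a)
      ((ZMod.intCast_eq_intCast_iff _ _ _).1 hab)
  have hcross : ∀ a ∈ F, ∀ b ∈ F, f a = -f b → a = b := by
    intro a ha b hb hab
    by_contra hne'
    have h1 : ((dotZ (fun j => -(natCast a j)) z : ℤ) : ZMod n)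
        = ((dotZ (natCast b) z : ℤ) : ZMod n) := by
      rw [hdotneg]; push_cast
      show -f a = f b
      rw [hab, neg_neg]
    exact hC a ((hmemF a).1 ha) b ((hmemF b).1 hb) hne' _ (hflipneg a)
      ((ZMod.intCast_eq_intCast_iff _ _ _).1 h1)
  set A : Finset (ZMod n) := F.image f with hA
  set B : Finset (ZMod n) := F.image (fun h => -f h) with hB
  have hAcard : A.card = F.card := Finset.card_image_of_injOn hinj
  have hBcard : B.card = F.card :=
    Finset.card_image_of_injOn (fun a ha b hb hab => hinj ha hb (neg_injective hab))
  have hT : ∀ x ∈ A ∩ B, x + x = 0 := by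
    intro x hx
    rw [Finset.mem_inter] at hx
    obtain ⟨hxA, hxB⟩ := hx
    obtain ⟨a, ha, rfl⟩ := Finset.mem_image.1 hxA
    obtain ⟨b, hb, hba⟩ := Finset.mem_image.1 hxB
    obtain rfl := hcross a ha b hb (by rw [← hba])
    linear_combination -hba
  have hTcard : (A ∩ B).card ≤ 2 := by
    have hkey : ∀ x ∈ A ∩ B, ∀ y ∈ A ∩ B, (x = 0 ↔ y = 0) → x = y := by
      intro x hx y hy hxy
      by_cases hx0 : x = 0
      · rw [hx0, (hxy.1 hx0).symm]
      · have hy0 : y ≠ 0 := fun h => hx0 (hxy.2 h)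
        have hval : ∀ w : ZMod n, w ∈ A ∩ B → w ≠ 0 → 2 * w.val = n := by
          intro w hw hw0
          have h2 : ((2 * w.val : ℕ) : ZMod n) = 0 := by
            push_cast
            rw [ZMod.natCast_rightInverse w]
            have := hT w hw
            linear_combination this
          have hdvd : n ∣ 2 * w.val := (ZMod.natCast_eq_zero_iff _ _).1 h2
          have hlt : w.val < n := ZMod.val_lt w
          have hv0 : w.val ≠ 0 := fun h => hw0 (by
            have := ZMod.natCast_rightInverse w
            rw [← this, h]; simp)
          obtain ⟨c, hc⟩ := hdvd
          have hcle : c < 2 := by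
            by_contra hcc
            push_neg at hcc
            nlinarith
          interval_cases c <;> omega
        have := hval x hx hx0
        have := hval y hy hy0
        have hvv : x.val = y.val := by omega
        exact ZMod.val_injective n hvv
    have : Set.InjOn (fun x : ZMod n => decide (x = 0)) ↑(A ∩ B) := by
      intro x hx y hy hxy
      simp only [decide_eq_decide] at hxy
      exact hkey x hx y hy hxy
    calc (A ∩ B).card ≤ Fintype.card Bool :=
          Finset.card_le_card_of_injOn _ (fun x _ => Finset.mem_univ _) this
      _ = 2 := by simp
  have hunion : (A ∪ B).card ≤ n := by
    calc (A ∪ B).card ≤ Fintype.card (ZMod n) := Finset.card_le_univ _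
      _ = n := ZMod.card n
  have hcount : A.card + B.card = (A ∪ B).card + (A ∩ B).card :=
    (Finset.card_union_add_card_inter A B).symm
  have hFk : F.card = Λ.ncard := (Set.ncard_eq_toFinset_card Λ hfin).symm
  have : 2 * Λ.ncard ≤ n + 2 := by omega
  push_cast
  omega
end

section
/- Let k ∈ ℕ₀^d and let B_k = {h ∈ ℕ₀^d : h ≤ k}. Set n = ∏_{j=1}^d (2k_j + 1) and z = (z_1,…,z_d) with z_1 = 1 and z_i = ∏_{j=1}^{i−1} (2k_j + 1) for i = 2,…,d. Then the map h ↦ h·z is a bijection from B_{2k} onto {0,1,…,n−1}, the pair (n,z) is Plan A admissible for B_k, and n_A*(B_k) = ∏_{j=1}^d (2k_j + 1). -/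
open Pointwise

section Aux
variable {d : ℕ} (b : Fin d → ℕ)

lemma prod_Iio_eq_prod_fin (i : Fin d) :
    ∏ j ∈ Finset.Iio i, b j = ∏ j : Fin i.val, b (Fin.castLE i.isLt.le j) := by
  refine Finset.prod_bij'
    (fun j hj => (⟨j.1, Fin.lt_def.mp (Finset.mem_Iio.mp hj)⟩ : Fin i.val))
    (fun j _ => Fin.castLE i.isLt.le j) ?_ ?_ ?_ ?_ ?_ <;>
    intros <;> simp_all [Finset.mem_Iio, Fin.lt_def, Fin.castLE]

/-- The mixed-radix ℕ-valued map. -/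
def natMap (h : Fin d → ℕ) : ℕ := ∑ j, h j * ∏ i ∈ Finset.Iio j, b i

lemma natMap_eq_equiv (f : ∀ i, Fin (b i)) :
    natMap b (fun j => (f j : ℕ)) = (finPiFinEquiv f : ℕ) := by
  rw [finPiFinEquiv_apply, natMap]
  exact Finset.sum_congr rfl fun j _ => by rw [prod_Iio_eq_prod_fin]

lemma natMap_lt (h : Fin d → ℕ) (hb : ∀ j, h j < b j) : natMap b h < ∏ j, b j := by
  have := natMap_eq_equiv b (fun j => ⟨h j, hb j⟩)
  simpa using this ▸ (finPiFinEquiv (fun j => (⟨h j, hb j⟩ : Fin (b j)))).isLt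

lemma natMap_inj (h h' : Fin d → ℕ) (hb : ∀ j, h j < b j) (hb' : ∀ j, h' j < b j)
    (he : natMap b h = natMap b h') : h = h' := by
  have e1 := natMap_eq_equiv b (fun j => ⟨h j, hb j⟩)
  have e2 := natMap_eq_equiv b (fun j => ⟨h' j, hb' j⟩)
  simp only at e1 e2
  have : finPiFinEquiv (fun j => (⟨h j, hb j⟩ : Fin (b j))) =
      finPiFinEquiv (fun j => (⟨h' j, hb' j⟩ : Fin (b j))) :=
    Fin.ext (by rw [← e1, ← e2, he])
  have := finPiFinEquiv.injective this
  funext j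
  exact congrArg Fin.val (congrFun this j)

lemma natMap_surj (m : ℕ) (hm : m < ∏ j, b j) :
    ∃ h : Fin d → ℕ, (∀ j, h j < b j) ∧ natMap b h = m := by
  set f := finPiFinEquiv.symm (⟨m, hm⟩ : Fin (∏ j, b j))
  refine ⟨fun j => (f j : ℕ), fun j => (f j).isLt, ?_⟩
  rw [natMap_eq_equiv b f]
  simp [f]

end Aux

section Block
variable {d : ℕ} (k : Fin d → ℕ)

private abbrev bb : Fin d → ℕ := fun j => 2 * k j + 1

private abbrev zz : Fin d → ℤ := fun i => ∏ j ∈ Finset.Iio i, (2 * (k j : ℤ) + 1)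

lemma dot_nat (h : Fin d → ℕ) : dotZ (natCast h) (zz k) = (natMap (bb k) h : ℤ) := by
  simp only [dotZ, natCast, natMap, zz]
  push_cast
  rfl

lemma Ncast : ((∏ j, bb k j : ℕ) : ℤ) = ∏ j, (2 * (k j : ℤ) + 1) := by
  push_cast; rfl

lemma zero_of_dvd (δ : Fin d → ℤ) (hδ : ∀ j, (δ j).natAbs ≤ 2 * k j)
    (hdvd : ((∏ j, bb k j : ℕ) : ℤ) ∣ dotZ δ (zz k)) : δ = 0 := by
  set p : Fin d → ℕ := fun j => (δ j).toNat with hp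
  set q : Fin d → ℕ := fun j => (-(δ j)).toNat with hq
  have hpb : ∀ j, p j < bb k j := fun j => by
    have := hδ j; show (δ j).toNat < 2 * k j + 1; omega
  have hqb : ∀ j, q j < bb k j := fun j => by
    have := hδ j; show (-(δ j)).toNat < 2 * k j + 1; omega
  have hδeq : ∀ j, δ j = (p j : ℤ) - (q j : ℤ) := fun j => by
    simp only [hp, hq]; omega
  have hdot : dotZ δ (zz k) = (natMap (bb k) p : ℤ) - (natMap (bb k) q : ℤ) := by
    rw [← dot_nat, ← dot_nat]
    simp only [dotZ, ← Finset.sum_sub_distrib, ← sub_mul, natCast]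
    exact Finset.sum_congr rfl fun j _ => by rw [hδeq j]
  have hplt := natMap_lt (bb k) p hpb
  have hqlt := natMap_lt (bb k) q hqb
  have hzero : dotZ δ (zz k) = 0 := by
    refine Int.eq_zero_of_abs_lt_dvd hdvd ?_
    rw [hdot, abs_sub_lt_iff]
    have h1 : (natMap (bb k) p : ℤ) < ((∏ j, bb k j : ℕ) : ℤ) := by exact_mod_cast hplt
    have h2 : (natMap (bb k) q : ℤ) < ((∏ j, bb k j : ℕ) : ℤ) := by exact_mod_cast hqlt
    constructor <;> omega
  have : natMap (bb k) p = natMap (bb k) q := by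
    have := hzero; rw [hdot] at this
    exact_mod_cast sub_eq_zero.mp this
  have hpq := natMap_inj (bb k) p q hpb hqb this
  funext j
  have := congrFun hpq j
  rw [hδeq j, this]; simp

lemma planA_block : PlanA (blockSet k) (∏ j, (2 * k j + 1)) (zz k) := by
  intro h hh h' hh' hne hmod
  have hdvd : ((∏ j, bb k j : ℕ) : ℤ) ∣ dotZ (fun j => h j - h' j) (zz k) := by
    have : dotZ (fun j => h j - h' j) (zz k) = dotZ h (zz k) - dotZ h' (zz k) := by
      simp [dotZ, sub_mul, Finset.sum_sub_distrib]
    rw [this]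
    exact (Int.ModEq.dvd hmod.symm)
  have hbound : ∀ j, ((h j - h' j)).natAbs ≤ 2 * k j := fun j => by
    have h1 : (h j).natAbs ≤ k j := hh j
    have h2 : (h' j).natAbs ≤ k j := hh' j
    calc (h j - h' j).natAbs ≤ (h j).natAbs + (h' j).natAbs := Int.natAbs_sub_le _ _
      _ ≤ 2 * k j := by omega
  have := zero_of_dvd k _ hbound hdvd
  exact hne (funext fun j => by have := congrFun this j; simpa [sub_eq_zero] using this)

end Block

theorem block_optimal_planA {d : ℕ} (k : Fin d → ℕ) :
    Set.BijOn
      (fun h : Fin d → ℕ =>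
        dotZ (natCast h) (fun i => ∏ j ∈ Finset.Iio i, (2 * (k j : ℤ) + 1)))
      (blockSet (fun j => 2 * k j))
      (Set.Ico (0 : ℤ) (∏ j, (2 * (k j : ℤ) + 1))) ∧
    PlanA (blockSet k) (∏ j, (2 * k j + 1))
      (fun i => ∏ j ∈ Finset.Iio i, (2 * (k j : ℤ) + 1)) ∧
    IsLeast {m : ℕ | 0 < m ∧ ∃ z : Fin d → ℤ, PlanA (blockSet k) m z}
      (∏ j, (2 * k j + 1)) := by
  refine ⟨⟨?_, ?_, ?_⟩, planA_block k, ⟨?_, ?_⟩⟩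
  · -- MapsTo
    intro h hh
    have hb : ∀ j, h j < bb k j := fun j => Nat.lt_succ_of_le (hh j)
    rw [Set.mem_Ico]
    constructor
    · show (0:ℤ) ≤ dotZ (natCast h) (zz k)
      rw [dot_nat k h]; positivity
    · show dotZ (natCast h) (zz k) < ∏ j, (2 * (k j : ℤ) + 1)
      rw [dot_nat k h, ← Ncast k]
      exact_mod_cast natMap_lt (bb k) h hb
  · -- InjOn
    intro h hh h' hh' he
    have hb : ∀ j, h j < bb k j := fun j => Nat.lt_succ_of_le (hh j)
    have hb' : ∀ j, h' j < bb k j := fun j => Nat.lt_succ_of_le (hh' j)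
    have he' : dotZ (natCast h) (zz k) = dotZ (natCast h') (zz k) := he
    rw [dot_nat k h, dot_nat k h'] at he'
    exact natMap_inj (bb k) h h' hb hb' (by exact_mod_cast he')
  · -- SurjOn
    intro m hm
    rw [Set.mem_Ico] at hm
    have hmlt : m.toNat < ∏ j, bb k j := by
      have := hm.2; rw [← Ncast k] at this
      omega
    obtain ⟨h, hb, hval⟩ := natMap_surj (bb k) m.toNat hmlt
    refine ⟨h, fun j => Nat.lt_succ_iff.mp (hb j), ?_⟩
    show dotZ (natCast h) (zz k) = m
    rw [dot_nat k h, hval]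
    omega
  · -- membership
    exact ⟨Finset.prod_pos fun j _ => by omega, zz k, planA_block k⟩
  · -- lower bound
    rintro m ⟨hm, z', hz'⟩
    haveI : NeZero m := ⟨hm.ne'⟩
    set F : Finset (Fin d → ℤ) :=
      Finset.Icc (fun j => -(k j : ℤ)) (fun j => (k j : ℤ)) with hF
    have hcard : F.card = ∏ j, (2 * k j + 1) := by
      rw [hF, Pi.card_Icc]
      refine Finset.prod_congr rfl fun j _ => ?_
      rw [Int.card_Icc]
      omega
    have hmem : ∀ h ∈ F, h ∈ mirror (blockSet k) := by
      intro h hh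
      rw [hF, Finset.mem_Icc] at hh
      intro j
      have h1 := hh.1 j
      have h2 := hh.2 j
      simp only at h1 h2 ⊢
      omega
    have hinj : Set.InjOn (fun h : Fin d → ℤ => ((dotZ h z' : ℤ) : ZMod m)) F := by
      intro h hh h' hh' he
      by_contra hne
      exact hz' h (hmem h hh) h' (hmem h' hh') hne
        ((ZMod.intCast_eq_intCast_iff _ _ _).mp he)
    calc ∏ j, (2 * k j + 1) = F.card := hcard.symm
      _ ≤ (Finset.univ : Finset (ZMod m)).card :=
          Finset.card_le_card_of_injOn _ (fun _ _ => Finset.mem_univ _) hinj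
      _ = m := by simp [ZMod.card]
end

section
/- Let d = 2 and k ∈ ℕ, and let S_{1,k} = {h ∈ ℕ₀² : h_1 + h_2 ≤ k}. Then the pair (n,z) with n = 2k² + 2k + 1 = #M(S_{1,k}) and z = (1, 2k+1) is Plan A admissible for S_{1,k}; consequently n_A*(S_{1,k}) = 2k² + 2k + 1. -/
open Pointwise

namespace SimplexPlanAAux

lemma corePos (k u v : ℤ) (hk : 1 ≤ k) (hle : |u| + |v| ≤ 2*k)
    (heq : u + (2*k+1)*v = 2*k^2+2*k+1) : False := by
  have h1 : u ≤ 2*k - v := by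
    have := le_abs_self u; have := le_abs_self v; linarith
  have h2 : -(2*k) + v ≤ u := by
    have := neg_abs_le u; have := le_abs_self v; linarith
  have h3 : 2*k^2 + 1 ≤ 2*k*v := by linarith
  have hv : k + 1 ≤ v := by
    by_contra hcon
    push_neg at hcon
    have hvk : v ≤ k := by linarith
    nlinarith
  nlinarith

lemma core (k u v : ℤ) (hk : 1 ≤ k) (hle : |u| + |v| ≤ 2*k)
    (hdvd : (2*k^2+2*k+1 : ℤ) ∣ (u + (2*k+1)*v)) : u = 0 ∧ v = 0 := by
  obtain ⟨c, hc⟩ := hdvd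
  have hb : |u + (2*k+1)*v| ≤ 4*k^2 + 2*k := by
    calc |u + (2*k+1)*v| ≤ |u| + |(2*k+1)*v| := abs_add_le _ _
    _ = |u| + (2*k+1)*|v| := by rw [abs_mul, abs_of_pos (by linarith : (0:ℤ) < 2*k+1)]
    _ ≤ 4*k^2 + 2*k := by
        have h1v : |v| ≤ 2*k := by have := abs_nonneg u; linarith
        have := abs_nonneg u; nlinarith
  have hc1 : |c| ≤ 1 := by
    by_contra hcon
    push_neg at hcon
    have h2c : 2 ≤ |c| := hcon
    have : (2*k^2+2*k+1) * 2 ≤ (2*k^2+2*k+1) * |c| := by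
      have : (0:ℤ) < 2*k^2+2*k+1 := by nlinarith
      nlinarith
    rw [hc, abs_mul, abs_of_pos (by nlinarith : (0:ℤ) < 2*k^2+2*k+1)] at hb
    nlinarith
  have hcl := abs_le.mp hc1
  obtain ⟨hcl1, hcl2⟩ := hcl
  interval_cases c
  · exfalso
    apply corePos k (-u) (-v) hk
    · rw [abs_neg, abs_neg]; exact hle
    · linarith
  · have hv : v = 0 := by
      by_contra hv0
      have h1 : 1 ≤ |v| := by
        rcases lt_or_gt_of_ne hv0 with h | h
        · rw [abs_of_neg h]; omega
        · rw [abs_of_pos h]; omega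
      have hu : u = -((2*k+1)*v) := by linarith
      have : |u| = (2*k+1) * |v| := by
        rw [hu, abs_neg, abs_mul, abs_of_pos (by linarith : (0:ℤ) < 2*k+1)]
      have := abs_nonneg v
      nlinarith
    constructor
    · rw [hv] at hc; linarith
    · exact hv
  · exact absurd (by linarith : u + (2*k+1)*v = 2*k^2+2*k+1) (fun h => corePos k u v hk hle h)

lemma memMirror (k : ℕ) (h : Fin 2 → ℤ) :
    h ∈ mirror (simplex1 2 k) ↔ |h 0| + |h 1| ≤ (k : ℤ) := by
  simp only [mirror, simplex1, Set.mem_setOf_eq, Fin.sum_univ_two]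
  rw [← Nat.cast_le (α := ℤ)]
  push_cast [Int.natCast_natAbs]
  rfl

lemma surjAux (k m : ℤ) (hk : 1 ≤ k) (hm0 : 0 ≤ m) (hmn : m < 2*k^2+2*k+1) :
    ∃ a b : ℤ, |a| + |b| ≤ k ∧ (2*k^2+2*k+1 : ℤ) ∣ m - (a + (2*k+1)*b) := by
  set q : ℤ := (m + k) / (2*k+1) with hq
  set a : ℤ := (m + k) % (2*k+1) - k with ha
  have hme : (m + k) % (2*k+1) + (2*k+1) * q = m + k := Int.emod_add_mul_ediv _ _
  have hmqa : m = (2*k+1)*q + a := by omega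
  have har : 0 ≤ (m + k) % (2*k+1) := Int.emod_nonneg _ (by linarith)
  have har2 : (m + k) % (2*k+1) < 2*k+1 := Int.emod_lt_of_pos _ (by linarith)
  have hab : -k ≤ a ∧ a ≤ k := by omega
  have hq0 : 0 ≤ q := by nlinarith
  have hqk : q ≤ k := by nlinarith
  by_cases hcase : |a| + q ≤ k
  · exact ⟨a, q, by rwa [abs_of_nonneg hq0], ⟨0, by linarith⟩⟩
  · push_neg at hcase
    by_cases hpos : 0 < a
    · refine ⟨a - (k+1), q - k, ?_, ⟨1, by linear_combination hmqa⟩⟩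
      rw [abs_of_pos hpos] at hcase
      rw [abs_of_nonpos (by linarith), abs_of_nonpos (by linarith)]
      linarith
    · push_neg at hpos
      have hane : a < 0 := by
        rcases lt_or_eq_of_le hpos with h | h
        · exact h
        · exfalso; rw [h] at hcase; simp at hcase; linarith
      refine ⟨a + k, q - (k+1), ?_, ⟨1, by linear_combination hmqa⟩⟩
      rw [abs_of_neg hane] at hcase
      rw [abs_of_nonneg (by linarith), abs_of_nonpos (by linarith)]
      linarith

lemma dotZ_eq (k : ℕ) (h : Fin 2 → ℤ) :
    dotZ h ![1, 2 * (k : ℤ) + 1] = h 0 + (2*(k:ℤ)+1) * h 1 := by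
  simp [dotZ, Fin.sum_univ_two]; ring

lemma castn (k : ℕ) : ((2 * k ^ 2 + 2 * k + 1 : ℕ) : ℤ) = 2*(k:ℤ)^2+2*(k:ℤ)+1 := by
  push_cast; ring

lemma injAux (k : ℕ) (hk : 1 ≤ k) :
    ∀ h ∈ mirror (simplex1 2 k), ∀ h' ∈ mirror (simplex1 2 k),
      dotZ h ![1, 2 * (k : ℤ) + 1] ≡ dotZ h' ![1, 2 * (k : ℤ) + 1]
        [ZMOD ((2 * k ^ 2 + 2 * k + 1 : ℕ) : ℤ)] → h = h' := by
  intro h hm h' hm' hmod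
  have hK : 1 ≤ (k : ℤ) := by exact_mod_cast hk
  have hdvd := hmod.dvd
  rw [castn k, dotZ_eq, dotZ_eq] at hdvd
  have hdvd2 : (2*(k:ℤ)^2+2*(k:ℤ)+1) ∣ ((h' 0 - h 0) + (2*(k:ℤ)+1) * (h' 1 - h 1)) := by
    have heq : (h' 0 - h 0) + (2*(k:ℤ)+1) * (h' 1 - h 1)
        = (h' 0 + (2*(k:ℤ)+1) * h' 1) - (h 0 + (2*(k:ℤ)+1) * h 1) := by ring
    rw [heq]; exact hdvd
  have hb1 := (memMirror k h).mp hm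
  have hb2 := (memMirror k h').mp hm'
  have hle : |h' 0 - h 0| + |h' 1 - h 1| ≤ 2*(k:ℤ) := by
    have := abs_sub (h' 0) (h 0)
    have := abs_sub (h' 1) (h 1)
    linarith
  obtain ⟨hu, hv⟩ := core (k:ℤ) _ _ hK hle hdvd2
  have e0 : h 0 = h' 0 := by linarith
  have e1 : h 1 = h' 1 := by linarith
  funext j
  fin_cases j
  · exact e0
  · exact e1

theorem main (k : ℕ) (hk : 1 ≤ k) :
    (mirror (simplex1 2 k)).ncard = 2 * k ^ 2 + 2 * k + 1 ∧
    PlanA (simplex1 2 k) (2 * k ^ 2 + 2 * k + 1) ![1, 2 * (k : ℤ) + 1] ∧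
    IsLeast {m : ℕ | 0 < m ∧ ∃ z : Fin 2 → ℤ, PlanA (simplex1 2 k) m z}
      (2 * k ^ 2 + 2 * k + 1) := by
  have hK : 1 ≤ (k : ℤ) := by exact_mod_cast hk
  set n : ℕ := 2 * k ^ 2 + 2 * k + 1 with hn
  haveI : NeZero n := ⟨by omega⟩
  -- Plan A admissibility
  have hplanA : PlanA (simplex1 2 k) n ![1, 2 * (k : ℤ) + 1] := by
    intro h hm h' hm' hne hmod
    exact hne (injAux k hk h hm h' hm' hmod)
  -- the bijection with ZMod n
  set F : (mirror (simplex1 2 k)) → ZMod n :=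
    fun h => ((dotZ h.1 ![1, 2 * (k : ℤ) + 1] : ℤ) : ZMod n) with hF
  have hFinj : Function.Injective F := by
    intro h h' heq
    have hmod := (ZMod.intCast_eq_intCast_iff _ _ _).mp heq
    exact Subtype.ext (injAux k hk h.1 h.2 h'.1 h'.2 hmod)
  have hFsurj : Function.Surjective F := by
    intro x
    have hlt : (x.val : ℤ) < ((n : ℕ) : ℤ) := by exact_mod_cast x.val_lt
    rw [castn k] at hlt
    obtain ⟨a, b, hab, hdvd⟩ := surjAux (k:ℤ) (x.val : ℤ) hK (by positivity) hlt
    have hmem : (![a, b] : Fin 2 → ℤ) ∈ mirror (simplex1 2 k) := by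
      rw [memMirror]; simpa using hab
    refine ⟨⟨![a, b], hmem⟩, ?_⟩
    have : F ⟨![a, b], hmem⟩ = (((x.val : ℤ)) : ZMod n) := by
      rw [hF]
      rw [ZMod.intCast_eq_intCast_iff]
      rw [Int.modEq_iff_dvd]
      rw [castn k, dotZ_eq]
      simpa using hdvd
    rw [this]
    simp [ZMod.natCast_val, ZMod.intCast_cast, ZMod.cast_id]
  have hcard : Nat.card (mirror (simplex1 2 k)) = n := by
    rw [Nat.card_eq_of_bijective F ⟨hFinj, hFsurj⟩]
    simp [Nat.card_eq_fintype_card, ZMod.card]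
  have hncard : (mirror (simplex1 2 k)).ncard = n := by
    rw [← Nat.card_coe_set_eq]; exact hcard
  refine ⟨hncard, hplanA, ⟨⟨by omega, ![1, 2 * (k : ℤ) + 1], hplanA⟩, ?_⟩⟩
  rintro m ⟨hm0, z, hz⟩
  haveI : NeZero m := ⟨hm0.ne'⟩
  set G : (mirror (simplex1 2 k)) → ZMod m :=
    fun h => ((dotZ h.1 z : ℤ) : ZMod m) with hG
  have hGinj : Function.Injective G := by
    intro h h' heq
    by_contra hne
    have hne2 : h.1 ≠ h'.1 := fun e => hne (Subtype.ext e)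
    exact hz h.1 h.2 h'.1 h'.2 hne2 ((ZMod.intCast_eq_intCast_iff _ _ _).mp heq)
  have := Nat.card_le_card_of_injective G hGinj
  rw [hcard] at this
  simpa [Nat.card_eq_fintype_card, ZMod.card] using this

end SimplexPlanAAux

theorem simplex_dim2_optimal_planA (k : ℕ) (hk : 1 ≤ k) :
    (mirror (simplex1 2 k)).ncard = 2 * k ^ 2 + 2 * k + 1 ∧
    PlanA (simplex1 2 k) (2 * k ^ 2 + 2 * k + 1) ![1, 2 * (k : ℤ) + 1] ∧
    IsLeast {m : ℕ | 0 < m ∧ ∃ z : Fin 2 → ℤ, PlanA (simplex1 2 k) m z}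
      (2 * k ^ 2 + 2 * k + 1) := by
  exact SimplexPlanAAux.main k hk
end

section
/- Let k = (k_1,k_2) ∈ ℕ² with k_1, k_2 ≥ 1, and let C_k = {h ∈ ℕ₀² : h ≤ k and h_1 h_2 = 0} be the cross-type set. Then for every n ≤ (k_1+1)(k_2+1) and every z ∈ ℤ², the pair (n,z) is not Plan A admissible for C_k; that is, there exist distinct h, h' ∈ M(C_k) with h·z ≡ h'·z (mod n). -/
open Pointwise

/-- The cross-type set `C_k = {h ∈ ℕ₀² : h ≤ k, h₁ h₂ = 0}`. -/
def crossSet (k₁ k₂ : ℕ) : Set (Fin 2 → ℕ) :=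
  {h | h 0 ≤ k₁ ∧ h 1 ≤ k₂ ∧ h 0 * h 1 = 0}


section CrossAux

variable (k₁ k₂ n : ℕ) (z : Fin 2 → ℤ)

lemma dotZ_pair (a b : ℤ) : dotZ ![a, b] z = a * z 0 + b * z 1 := by
  simp [dotZ, Fin.sum_univ_two]

lemma mem_mirror_cross (a b : ℤ) (ha : a.natAbs ≤ k₁) (hb : b.natAbs ≤ k₂)
    (hab : a = 0 ∨ b = 0) : ![a, b] ∈ mirror (crossSet k₁ k₂) := by
  simp only [mirror, crossSet, Set.mem_setOf_eq, Matrix.cons_val_zero, Matrix.cons_val_one,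
    Matrix.head_cons]
  refine ⟨ha, hb, ?_⟩
  rcases hab with h | h <;> simp [h]

lemma cross_forbid (hP : PlanA (crossSet k₁ k₂) n z) (a b : ℤ)
    (ha : a.natAbs ≤ k₁) (hb : b.natAbs ≤ k₂) (hab : ¬(a = 0 ∧ b = 0)) :
    ¬ (a * z 0 ≡ b * z 1 [ZMOD (n : ℤ)]) := by
  intro hc
  refine hP ![a, 0] (mem_mirror_cross k₁ k₂ a 0 ha (by simp) (Or.inr rfl))
    ![0, b] (mem_mirror_cross k₁ k₂ 0 b (by simp) hb (Or.inl rfl)) ?_ ?_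
  · intro h
    refine hab ⟨by simpa using congrFun h 0, ?_⟩
    have := congrFun h 1
    simp at this
    exact this.symm
  · rw [dotZ_pair, dotZ_pair]
    simpa using hc

lemma forbid_axis0 (hP : PlanA (crossSet k₁ k₂) n z) (a a' : ℤ)
    (ha : a.natAbs ≤ k₁) (ha' : a'.natAbs ≤ k₁) (hne : a ≠ a') :
    ¬ (a * z 0 ≡ a' * z 0 [ZMOD (n : ℤ)]) := by
  intro hc
  refine hP ![a, 0] (mem_mirror_cross k₁ k₂ a 0 ha (by simp) (Or.inr rfl))
    ![a', 0] (mem_mirror_cross k₁ k₂ a' 0 ha' (by simp) (Or.inr rfl)) ?_ ?_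
  · intro h
    exact hne (by simpa using congrFun h 0)
  · rw [dotZ_pair, dotZ_pair]
    simpa using hc

lemma forbid_axis1 (hP : PlanA (crossSet k₁ k₂) n z) (b b' : ℤ)
    (hb : b.natAbs ≤ k₂) (hb' : b'.natAbs ≤ k₂) (hne : b ≠ b') :
    ¬ (b * z 1 ≡ b' * z 1 [ZMOD (n : ℤ)]) := by
  intro hc
  refine hP ![0, b] (mem_mirror_cross k₁ k₂ 0 b (by simp) hb (Or.inl rfl))
    ![0, b'] (mem_mirror_cross k₁ k₂ 0 b' (by simp) hb' (Or.inl rfl)) ?_ ?_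
  · intro h
    exact hne (by simpa using congrFun h 1)
  · rw [dotZ_pair, dotZ_pair]
    simpa using hc

lemma modeq_regroup (N x1 y1 x2 y2 w1 w2 : ℤ)
    (h : x1 * w1 - y1 * w2 ≡ x2 * w1 - y2 * w2 [ZMOD N]) :
    (x1 - x2) * w1 ≡ (y1 - y2) * w2 [ZMOD N] := by
  have hd := h.dvd
  rw [Int.modEq_iff_dvd]
  rw [show (y1 - y2) * w2 - (x1 - x2) * w1
      = (x2 * w1 - y2 * w2) - (x1 * w1 - y1 * w2) from by ring]
  exact hd

end CrossAux

theorem cross_not_planA (k₁ k₂ : ℕ) (hk₁ : 1 ≤ k₁) (hk₂ : 1 ≤ k₂)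
    (n : ℕ) (hn : 0 < n) (hle : n ≤ (k₁ + 1) * (k₂ + 1)) (z : Fin 2 → ℤ) :
    ¬ PlanA (crossSet k₁ k₂) n z ∧
    ∃ h ∈ mirror (crossSet k₁ k₂), ∃ h' ∈ mirror (crossSet k₁ k₂),
      h ≠ h' ∧ (dotZ h z ≡ dotZ h' z [ZMOD (n : ℤ)]) := by
  have hnot : ¬ PlanA (crossSet k₁ k₂) n z := by
    intro hP
    haveI : NeZero n := ⟨hn.ne'⟩
    set φ : Fin (k₁+1) × Fin (k₂+1) → ZMod n :=
      fun p => ((p.1 : ℕ) : ZMod n) * ((z 0 : ℤ) : ZMod n)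
             - ((p.2 : ℕ) : ZMod n) * ((z 1 : ℤ) : ZMod n) with hφ
    have cast_eq : ∀ x y : ℤ, ((x : ZMod n) = (y : ZMod n)) → x ≡ y [ZMOD (n : ℤ)] :=
      fun x y h => (ZMod.intCast_eq_intCast_iff x y n).mp h
    have hinj : Function.Injective φ := by
      intro p q h
      have h1 : ((((p.1 : ℕ) : ℤ) * z 0 - ((p.2 : ℕ) : ℤ) * z 1 : ℤ) : ZMod n)
              = ((((q.1 : ℕ) : ℤ) * z 0 - ((q.2 : ℕ) : ℤ) * z 1 : ℤ) : ZMod n) := by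
        push_cast
        simpa [hφ] using h
      have h3 := modeq_regroup (n : ℤ) _ _ _ _ _ _ (cast_eq _ _ h1)
      have hz : ((p.1 : ℕ) : ℤ) - ((q.1 : ℕ) : ℤ) = 0 ∧
          ((p.2 : ℕ) : ℤ) - ((q.2 : ℕ) : ℤ) = 0 := by
        by_contra hc
        have b1 := p.1.isLt; have b2 := q.1.isLt
        have b3 := p.2.isLt; have b4 := q.2.isLt
        exact cross_forbid k₁ k₂ n z hP _ _ (by omega) (by omega) hc h3
      obtain ⟨e1, e2⟩ := hz
      have : p.1 = q.1 := Fin.ext (by omega)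
      have : p.2 = q.2 := Fin.ext (by omega)
      rcases p with ⟨p1, p2⟩; rcases q with ⟨q1, q2⟩
      simp_all
    have hle2 : (k₁+1) * (k₂+1) ≤ n := by
      have hc := Fintype.card_le_of_injective φ hinj
      simpa [ZMod.card] using hc
    have hsurj : Function.Surjective φ := by
      have hcard : Fintype.card (Fin (k₁+1) × Fin (k₂+1)) = Fintype.card (ZMod n) := by
        simp [ZMod.card]
        omega
      exact ((Fintype.bijective_iff_injective_and_card φ).mpr ⟨hinj, hcard⟩).2
    have step : ∀ b : Fin (k₂+1), ∃ c : Fin (k₂+1),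
        ((k₁ : ℤ) + 1) * z 0 ≡ (((b : ℕ) : ℤ) - ((c : ℕ) : ℤ)) * z 1 [ZMOD (n : ℤ)] := by
      intro b
      obtain ⟨p, hp⟩ := hsurj (((((k₁ : ℤ) + 1)) * z 0 - ((b : ℕ) : ℤ) * z 1 : ℤ) : ZMod n)
      have h1 : ((((p.1 : ℕ) : ℤ) * z 0 - ((p.2 : ℕ) : ℤ) * z 1 : ℤ) : ZMod n)
              = (((((k₁ : ℤ) + 1)) * z 0 - ((b : ℕ) : ℤ) * z 1 : ℤ) : ZMod n) := by
        push_cast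
        simpa [hφ] using hp
      have h3 := modeq_regroup (n : ℤ) _ _ _ _ _ _ (cast_eq _ _ h1).symm
      -- h3 : ((k₁+1) - p.1) * z 0 ≡ (b - p.2) * z 1
      by_cases hp1 : p.1.val = 0
      · refine ⟨p.2, ?_⟩
        have e : ((p.1 : ℕ) : ℤ) = 0 := by omega
        rw [e] at h3
        simpa using h3
      · exfalso
        have b1 := p.1.isLt; have b2 := p.2.isLt; have b3 := b.isLt
        refine cross_forbid k₁ k₂ n z hP _ _ (by omega) (by omega) ?_ h3
        rintro ⟨h4, -⟩
        omega
    obtain ⟨c0, hc0⟩ := step 0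
    obtain ⟨cK, hcK⟩ := step (Fin.last k₂)
    have hc0' : ((k₁ : ℤ) + 1) * z 0 ≡ (-((c0 : ℕ) : ℤ)) * z 1 [ZMOD (n : ℤ)] := by
      simpa using hc0
    have hcK' : ((k₁ : ℤ) + 1) * z 0 ≡ ((k₂ : ℤ) - ((cK : ℕ) : ℤ)) * z 1 [ZMOD (n : ℤ)] := by
      simpa [Fin.val_last] using hcK
    have hde := hc0'.symm.trans hcK'
    have heq : -((c0 : ℕ) : ℤ) = (k₂ : ℤ) - ((cK : ℕ) : ℤ) := by
      by_contra hne
      have b1 := c0.isLt; have b2 := cK.isLt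
      exact forbid_axis1 k₁ k₂ n z hP _ _ (by omega) (by omega) hne hde
    have e0 : -((c0 : ℕ) : ℤ) = 0 := by
      have b2 := cK.isLt
      omega
    rw [e0] at hc0'
    have hzero : ((k₁ : ℤ) + 1) * z 0 ≡ 0 [ZMOD (n : ℤ)] := by simpa using hc0'
    have hfin : (k₁ : ℤ) * z 0 ≡ (-1) * z 0 [ZMOD (n : ℤ)] := by
      rw [Int.modEq_iff_dvd] at hzero ⊢
      rw [show ((-1 : ℤ) * z 0 - (k₁ : ℤ) * z 0) = 0 - (((k₁ : ℤ) + 1) * z 0) from by ring]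
      exact hzero
    exact forbid_axis0 k₁ k₂ n z hP (k₁ : ℤ) (-1) (by simp) (by simpa using hk₁)
      (by omega) hfin
  refine ⟨hnot, ?_⟩
  by_contra hcon
  push_neg at hcon
  exact hnot fun h hh h' hh' hne => hcon h hh h' hh' hne
end

section
/- Let k = (k_1,k_2) ∈ ℕ² with k_1, k_2 ≥ 1, and let C_k = {h ∈ ℕ₀² : h ≤ k and h_1 h_2 = 0}. Then the pair (n,z) with n = (k_1+1)(k_2+1) + 1 and z = (1, k_1+1) is Plan A admissible for C_k, and consequently n_A*(C_k) = (k_1+1)(k_2+1) + 1. -/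
open Pointwise

lemma dotZ_two (h z : Fin 2 → ℤ) : dotZ h z = h 0 * z 0 + h 1 * z 1 := by
  simp [dotZ, Fin.sum_univ_two]

lemma mem_mirror_cross_iff {k₁ k₂ : ℕ} {h : Fin 2 → ℤ} :
    h ∈ mirror (crossSet k₁ k₂) ↔
      |h 0| ≤ (k₁ : ℤ) ∧ |h 1| ≤ (k₂ : ℤ) ∧ (h 0 = 0 ∨ h 1 = 0) := by
  unfold mirror crossSet
  simp only [Set.mem_setOf_eq]
  constructor
  · rintro ⟨h1, h2, h3⟩
    refine ⟨?_, ?_, ?_⟩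
    · rw [Int.abs_eq_natAbs]; exact_mod_cast h1
    · rw [Int.abs_eq_natAbs]; exact_mod_cast h2
    · rcases Nat.mul_eq_zero.mp h3 with h | h
      · left; exact Int.natAbs_eq_zero.mp h
      · right; exact Int.natAbs_eq_zero.mp h
  · rintro ⟨h1, h2, h3⟩
    refine ⟨?_, ?_, ?_⟩
    · rw [Int.abs_eq_natAbs] at h1; exact_mod_cast h1
    · rw [Int.abs_eq_natAbs] at h2; exact_mod_cast h2
    · rcases h3 with h | h <;> simp [h]

lemma cross_key (k₁ k₂ : ℕ) (hk₁ : 1 ≤ k₁) (hk₂ : 1 ≤ k₂) (a b : ℤ)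
    (hcase : (|a| ≤ 2*(k₁:ℤ) ∧ b = 0) ∨ (a = 0 ∧ |b| ≤ 2*(k₂:ℤ)) ∨
      (|a| ≤ (k₁:ℤ) ∧ |b| ≤ (k₂:ℤ)))
    (hdvd : (((k₁:ℤ)+1)*((k₂:ℤ)+1)+1) ∣ a + b * ((k₁:ℤ)+1)) :
    a = 0 ∧ b = 0 := by
  set N : ℤ := ((k₁:ℤ)+1)*((k₂:ℤ)+1)+1 with hN
  have hK₁ : (1:ℤ) ≤ (k₁:ℤ) := by exact_mod_cast hk₁
  have hK₂ : (1:ℤ) ≤ (k₂:ℤ) := by exact_mod_cast hk₂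
  rcases hcase with ⟨ha, hb⟩ | ⟨ha, hb⟩ | ⟨ha, hb⟩
  · subst hb
    simp only [zero_mul, add_zero] at hdvd
    refine ⟨Int.eq_zero_of_abs_lt_dvd hdvd ?_, rfl⟩
    nlinarith
  · subst ha
    simp only [zero_add] at hdvd
    have hcop : IsCoprime N ((k₁:ℤ)+1) := ⟨1, -((k₂:ℤ)+1), by rw [hN]; ring⟩
    have hdb : N ∣ b := hcop.dvd_of_dvd_mul_right hdvd
    refine ⟨rfl, Int.eq_zero_of_abs_lt_dvd hdb ?_⟩
    nlinarith
  · have habs : |a + b * ((k₁:ℤ)+1)| < N := by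
      have h1 : |a + b * ((k₁:ℤ)+1)| ≤ |a| + |b| * ((k₁:ℤ)+1) := by
        calc |a + b * ((k₁:ℤ)+1)| ≤ |a| + |b * ((k₁:ℤ)+1)| := abs_add_le _ _
        _ = |a| + |b| * |(k₁:ℤ)+1| := by rw [abs_mul]
        _ = |a| + |b| * ((k₁:ℤ)+1) := by rw [abs_of_nonneg (by linarith : (0:ℤ) ≤ (k₁:ℤ)+1)]
      nlinarith [abs_nonneg b]
    have hz : a + b * ((k₁:ℤ)+1) = 0 := Int.eq_zero_of_abs_lt_dvd hdvd habs
    have hb0 : b = 0 := by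
      by_contra hb0
      have h1 : (1:ℤ) ≤ |b| := Int.one_le_abs (by simpa using hb0)
      have h2 : |a| = |b| * ((k₁:ℤ)+1) := by
        rw [show a = -(b * ((k₁:ℤ)+1)) by linarith, abs_neg, abs_mul,
          abs_of_nonneg (by linarith : (0:ℤ) ≤ (k₁:ℤ)+1)]
      nlinarith
    refine ⟨by rw [hb0] at hz; linarith, hb0⟩

lemma cross_planA (k₁ k₂ : ℕ) (hk₁ : 1 ≤ k₁) (hk₂ : 1 ≤ k₂) :
    PlanA (crossSet k₁ k₂) ((k₁ + 1) * (k₂ + 1) + 1) ![1, (k₁ : ℤ) + 1] := by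
  intro h hh h' hh' hne hmod
  rw [mem_mirror_cross_iff] at hh hh'
  obtain ⟨ha1, hb1, hz1⟩ := hh
  obtain ⟨ha2, hb2, hz2⟩ := hh'
  have hd : (((k₁ + 1) * (k₂ + 1) + 1 : ℕ) : ℤ) ∣ dotZ h ![1, (k₁ : ℤ) + 1] - dotZ h' ![1, (k₁ : ℤ) + 1] :=
    hmod.symm.dvd
  have hd2 : (((k₁:ℤ)+1)*((k₂:ℤ)+1)+1) ∣ (h 0 - h' 0) + (h 1 - h' 1) * ((k₁:ℤ)+1) := by
    obtain ⟨c, hc⟩ := hd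
    refine ⟨c, ?_⟩
    rw [dotZ_two, dotZ_two] at hc
    simp only [Matrix.cons_val_zero, Matrix.cons_val_one, Matrix.head_cons] at hc
    push_cast at hc
    linarith
  have key : h 0 - h' 0 = 0 ∧ h 1 - h' 1 = 0 := by
    apply cross_key k₁ k₂ hk₁ hk₂ _ _ _ hd2
    rcases hz1 with e1 | e1 <;> rcases hz2 with e2 | e2
    · right; left
      constructor
      · rw [e1, e2]; ring
      · calc |h 1 - h' 1| ≤ |h 1| + |h' 1| := abs_sub _ _
        _ ≤ 2*(k₂:ℤ) := by linarith
    · right; right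
      rw [e1, e2]
      constructor
      · simpa using ha2
      · simpa using hb1
    · right; right
      rw [e1, e2]
      constructor
      · simpa using ha1
      · simpa using hb2
    · left
      constructor
      · calc |h 0 - h' 0| ≤ |h 0| + |h' 0| := abs_sub _ _
        _ ≤ 2*(k₁:ℤ) := by linarith
      · rw [e1, e2]; ring
  exact hne (funext fun j => by fin_cases j <;> simp <;> omega)

lemma cross_box {k₁ k₂ m : ℕ} {z : Fin 2 → ℤ} (hP : PlanA (crossSet k₁ k₂) m z)
    (u v : ℤ) (hu : |u| ≤ (k₁:ℤ)) (hv : |v| ≤ (k₂:ℤ))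
    (hd : (m:ℤ) ∣ u * z 0 + v * z 1) : u = 0 ∧ v = 0 := by
  by_contra hcon
  have hne : (![u, 0] : Fin 2 → ℤ) ≠ ![0, -v] := by
    intro he
    apply hcon
    have e0 := congrFun he 0
    have e1 := congrFun he 1
    simp at e0 e1
    omega
  apply hP ![u, 0] ?_ ![0, -v] ?_ hne
  · rw [Int.modEq_iff_dvd, dotZ_two, dotZ_two]
    simp only [Matrix.cons_val_zero, Matrix.cons_val_one, Matrix.head_cons]
    obtain ⟨c, hc⟩ := hd
    exact ⟨-c, by linarith⟩
  · rw [mem_mirror_cross_iff]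
    refine ⟨by simpa using hu, by simp, Or.inr (by simp)⟩
  · rw [mem_mirror_cross_iff]
    refine ⟨by simp, by simpa using hv, Or.inl (by simp)⟩

lemma cross_nd1 {k₁ k₂ m : ℕ} (hk₁ : 1 ≤ k₁) {z : Fin 2 → ℤ}
    (hP : PlanA (crossSet k₁ k₂) m z) : ¬ (m:ℤ) ∣ ((k₁:ℤ)+1) * z 0 := by
  intro hd
  have hne : (![(k₁:ℤ), 0] : Fin 2 → ℤ) ≠ ![-1, 0] := by
    intro he
    have e0 := congrFun he 0
    simp at e0
  apply hP ![(k₁:ℤ), 0] ?_ ![-1, 0] ?_ hne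
  · rw [Int.modEq_iff_dvd, dotZ_two, dotZ_two]
    simp only [Matrix.cons_val_zero, Matrix.cons_val_one, Matrix.head_cons]
    obtain ⟨c, hc⟩ := hd
    exact ⟨-c, by linarith⟩
  · rw [mem_mirror_cross_iff]
    refine ⟨by simp, by simp, Or.inr (by simp)⟩
  · rw [mem_mirror_cross_iff]
    refine ⟨by simp; exact_mod_cast hk₁, by simp, Or.inr (by simp)⟩

lemma cross_nd2 {k₁ k₂ m : ℕ} (hk₂ : 1 ≤ k₂) {z : Fin 2 → ℤ}
    (hP : PlanA (crossSet k₁ k₂) m z) : ¬ (m:ℤ) ∣ ((k₂:ℤ)+1) * z 1 := by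
  intro hd
  have hne : (![0, (k₂:ℤ)] : Fin 2 → ℤ) ≠ ![0, -1] := by
    intro he
    have e1 := congrFun he 1
    simp at e1
  apply hP ![0, (k₂:ℤ)] ?_ ![0, -1] ?_ hne
  · rw [Int.modEq_iff_dvd, dotZ_two, dotZ_two]
    simp only [Matrix.cons_val_zero, Matrix.cons_val_one, Matrix.head_cons]
    obtain ⟨c, hc⟩ := hd
    exact ⟨-c, by linarith⟩
  · rw [mem_mirror_cross_iff]
    refine ⟨by simp, by simp, Or.inl (by simp)⟩
  · rw [mem_mirror_cross_iff]
    refine ⟨by simp, by simp; exact_mod_cast hk₂, Or.inl (by simp)⟩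

lemma cross_lb (k₁ k₂ : ℕ) (hk₁ : 1 ≤ k₁) (hk₂ : 1 ≤ k₂) (m : ℕ) (hm : 0 < m)
    (z : Fin 2 → ℤ) (hP : PlanA (crossSet k₁ k₂) m z) :
    (k₁ + 1) * (k₂ + 1) + 1 ≤ m := by
  haveI : NeZero m := ⟨hm.ne'⟩
  set f : Fin (k₁+1) × Fin (k₂+1) → ZMod m :=
    fun p => (((p.1.val : ℤ) * z 0 + (p.2.val : ℤ) * z 1 : ℤ) : ZMod m) with hf
  have hinj : Function.Injective f := by
    rintro ⟨u, v⟩ ⟨u', v'⟩ hpq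
    simp only [hf] at hpq
    rw [ZMod.intCast_eq_intCast_iff] at hpq
    have hd := hpq.dvd
    have hd2 : (m:ℤ) ∣ ((u'.val:ℤ) - u.val) * z 0 + ((v'.val:ℤ) - v.val) * z 1 := by
      obtain ⟨c, hc⟩ := hd
      exact ⟨c, by linarith⟩
    have h1 := u.isLt; have h2 := u'.isLt; have h3 := v.isLt; have h4 := v'.isLt
    have hbox := cross_box hP _ _ (by rw [abs_le]; constructor <;> push_cast <;> omega)
      (by rw [abs_le]; constructor <;> push_cast <;> omega) hd2
    have e1 : u = u' := Fin.ext (by omega)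
    have e2 : v = v' := Fin.ext (by omega)
    rw [e1, e2]
  have hge : (k₁ + 1) * (k₂ + 1) ≤ m := by
    have := Fintype.card_le_of_injective f hinj
    simpa [ZMod.card] using this
  have hne : m ≠ (k₁ + 1) * (k₂ + 1) := by
    intro heq
    have hbij : Function.Bijective f :=
      (Fintype.bijective_iff_injective_and_card f).mpr ⟨hinj, by simp [ZMod.card, heq]⟩
    -- surjectivity at (k₁+1) z 0
    obtain ⟨⟨u, v⟩, h1⟩ := hbij.2 ((((k₁:ℤ)+1) * z 0 : ℤ) : ZMod m)
    simp only [hf] at h1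
    rw [ZMod.intCast_eq_intCast_iff] at h1
    have hd := h1.dvd
    have hu := u.isLt; have hv := v.isLt
    have hu0 : u.val = 0 := by
      by_contra hu0
      have hd2 : (m:ℤ) ∣ ((k₁:ℤ) + 1 - u.val) * z 0 + (-(v.val:ℤ)) * z 1 := by
        obtain ⟨c, hc⟩ := hd
        exact ⟨c, by linarith⟩
      have hbox := cross_box hP _ _ (by rw [abs_le]; constructor <;> push_cast <;> omega)
        (by rw [abs_le]; constructor <;> push_cast <;> omega) hd2
      have : (k₁:ℤ) + 1 - u.val = 0 := hbox.1
      have : ((u.val:ℤ)) = (k₁:ℤ) + 1 := by linarith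
      push_cast at this
      omega
    have d1 : (m:ℤ) ∣ ((k₁:ℤ)+1) * z 0 - (v.val:ℤ) * z 1 := by
      obtain ⟨c, hc⟩ := hd
      refine ⟨c, ?_⟩
      rw [hu0] at hc
      push_cast at hc
      linarith
    have hv1 : 1 ≤ v.val := by
      by_contra hv0
      have : v.val = 0 := by omega
      rw [this] at d1
      push_cast at d1
      exact cross_nd1 hk₁ hP (by simpa using d1)
    -- surjectivity at (k₂+1) z 1
    obtain ⟨⟨u', v'⟩, h2⟩ := hbij.2 ((((k₂:ℤ)+1) * z 1 : ℤ) : ZMod m)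
    simp only [hf] at h2
    rw [ZMod.intCast_eq_intCast_iff] at h2
    have hd' := h2.dvd
    have hu' := u'.isLt; have hv' := v'.isLt
    have hv'0 : v'.val = 0 := by
      by_contra hv'0
      have hd2 : (m:ℤ) ∣ (-(u'.val:ℤ)) * z 0 + ((k₂:ℤ) + 1 - v'.val) * z 1 := by
        obtain ⟨c, hc⟩ := hd'
        exact ⟨c, by linarith⟩
      have hbox := cross_box hP _ _ (by rw [abs_le]; constructor <;> push_cast <;> omega)
        (by rw [abs_le]; constructor <;> push_cast <;> omega) hd2
      have : (k₂:ℤ) + 1 - v'.val = 0 := hbox.2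
      have : ((v'.val:ℤ)) = (k₂:ℤ) + 1 := by linarith
      push_cast at this
      omega
    have d2 : (m:ℤ) ∣ ((k₂:ℤ)+1) * z 1 - (u'.val:ℤ) * z 0 := by
      obtain ⟨c, hc⟩ := hd'
      refine ⟨c, ?_⟩
      rw [hv'0] at hc
      push_cast at hc
      linarith
    have hu'1 : 1 ≤ u'.val := by
      by_contra hu'0
      have : u'.val = 0 := by omega
      rw [this] at d2
      push_cast at d2
      exact cross_nd2 hk₂ hP (by simpa using d2)
    -- combine
    have d3 : (m:ℤ) ∣ ((k₁:ℤ) + 1 - u'.val) * z 0 + ((k₂:ℤ) + 1 - v.val) * z 1 := by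
      obtain ⟨c, hc⟩ := d1
      obtain ⟨c', hc'⟩ := d2
      exact ⟨c + c', by push_cast; linarith⟩
    have hbox := cross_box hP _ _ (by rw [abs_le]; constructor <;> push_cast <;> omega)
      (by rw [abs_le]; constructor <;> push_cast <;> omega) d3
    have : (k₁:ℤ) + 1 - u'.val = 0 := hbox.1
    have : ((u'.val:ℤ)) = (k₁:ℤ) + 1 := by linarith
    push_cast at this
    omega
  omega

theorem cross_optimal_planA (k₁ k₂ : ℕ) (hk₁ : 1 ≤ k₁) (hk₂ : 1 ≤ k₂) :
    PlanA (crossSet k₁ k₂) ((k₁ + 1) * (k₂ + 1) + 1) ![1, (k₁ : ℤ) + 1] ∧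
    IsLeast {m : ℕ | 0 < m ∧ ∃ z : Fin 2 → ℤ, PlanA (crossSet k₁ k₂) m z}
      ((k₁ + 1) * (k₂ + 1) + 1) := by
  refine ⟨cross_planA k₁ k₂ hk₁ hk₂, ⟨⟨by positivity, ![1, (k₁ : ℤ) + 1], cross_planA k₁ k₂ hk₁ hk₂⟩, ?_⟩⟩
  rintro m ⟨hm, z, hP⟩
  exact cross_lb k₁ k₂ hk₁ hk₂ m hm z hP
end

section
/- Let w_1,…,w_d > 0 and u_1, u_2 > 0, and for u > 0 set S_{w,u} = {h ∈ ℕ₀^d : Σ_j w_j h_j ≤ u}. Then S_{w, u_1+u_2−max_i(w_i)} ⊆ S_{w,u_1} ⊕ S_{w,u_2} ⊆ S_{w,u_1+u_2}. In particular, in the isotropic case w = (1,…,1), one has S_{1,k_1} ⊕ S_{1,k_2} = S_{1,k_1+k_2} for all k_1, k_2 ∈ ℕ. -/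
open Pointwise

/-- The anisotropic simplex set `S_{w,u} = {h ∈ ℕ₀^d : Σ_j w_j h_j ≤ u}`. -/
def simplexW {d : ℕ} (w : Fin d → ℝ) (u : ℝ) : Set (Fin d → ℕ) :=
  {h | ∑ j, w j * (h j : ℝ) ≤ u}

private lemma sumW_update {d : ℕ} (w : Fin d → ℝ) (a : Fin d → ℕ) (i : Fin d) (v : ℕ) :
    ∑ j, w j * ((Function.update a i v) j : ℝ)
      = (∑ j, w j * (a j : ℝ)) - w i * a i + w i * v := by
  have he : ∀ j, w j * ((Function.update a i v) j : ℝ)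
      = Function.update (fun j => w j * (a j : ℝ)) i (w i * v) j := by
    intro j
    by_cases hj : j = i
    · subst hj; simp
    · simp [Function.update_of_ne hj]
  rw [Finset.sum_congr rfl (fun j _ => he j), Finset.sum_update_of_mem (Finset.mem_univ i)]
  have h2 := Finset.add_sum_erase Finset.univ (fun j => w j * (a j : ℝ)) (Finset.mem_univ i)
  rw [Finset.erase_eq] at h2
  linarith

private lemma sumN_update {d : ℕ} (a : Fin d → ℕ) (i : Fin d) (v : ℕ) :
    ∑ j, (Function.update a i v) j = (∑ j, a j) - a i + v := by
  rw [Finset.sum_update_of_mem (Finset.mem_univ i)]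
  have h2 := Finset.add_sum_erase Finset.univ a (Finset.mem_univ i)
  rw [Finset.erase_eq] at h2
  have hle : a i ≤ ∑ j, a j := Finset.single_le_sum (fun j _ => Nat.zero_le _) (Finset.mem_univ i)
  omega

private lemma splitW {d : ℕ} (w : Fin d → ℝ) (hw : ∀ j, 0 < w j) (M : ℝ)
    (hM : ∀ j, w j ≤ M) :
    ∀ (n : ℕ) (u₁ u₂ : ℝ), 0 ≤ u₁ → 0 ≤ u₂ → ∀ h : Fin d → ℕ, ∑ j, h j = n →
    ∑ j, w j * (h j : ℝ) ≤ u₁ + u₂ - M →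
    ∃ a b : Fin d → ℕ, a + b = h ∧ ∑ j, w j * (a j : ℝ) ≤ u₁ ∧ ∑ j, w j * (b j : ℝ) ≤ u₂ := by
  intro n
  induction n with
  | zero =>
    intro u₁ u₂ hu₁ hu₂ h hsum _
    have hz : ∀ j, h j = 0 := by
      intro j
      have := Finset.sum_eq_zero_iff.mp hsum j (Finset.mem_univ j)
      exact this
    refine ⟨h, 0, by simp, ?_, by simpa using hu₂⟩
    simpa [hz] using hu₁
  | succ n ih =>
    intro u₁ u₂ hu₁ hu₂ h hsum hW
    by_cases hc : ∑ j, w j * (h j : ℝ) ≤ u₁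
    · exact ⟨h, 0, by simp, hc, by simpa using hu₂⟩
    push_neg at hc
    obtain ⟨i, hi⟩ : ∃ i, h i ≠ 0 := by
      by_contra hall
      push_neg at hall
      simp [hall] at hsum
    set h' : Fin d → ℕ := Function.update h i (h i - 1) with hh'
    have hle1 : h i ≤ ∑ j, h j := Finset.single_le_sum (fun j _ => Nat.zero_le _) (Finset.mem_univ i)
    have hi1 : 1 ≤ h i := Nat.one_le_iff_ne_zero.mpr hi
    have hsum' : ∑ j, h' j = n := by
      rw [hh', sumN_update]; omega
    have hWh' : ∑ j, w j * (h' j : ℝ) = (∑ j, w j * (h j : ℝ)) - w i := by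
      rw [hh', sumW_update]
      have : ((h i - 1 : ℕ) : ℝ) = (h i : ℝ) - 1 := by
        have : 1 ≤ h i := Nat.one_le_iff_ne_zero.mpr hi
        push_cast [this]; ring
      rw [this]; ring
    have hwiM : w i ≤ M := hM i
    have hu₂' : 0 ≤ u₂ - w i := by
      have : ∑ j, w j * (h j : ℝ) ≤ u₁ + u₂ - w i := by linarith
      linarith
    have hW' : ∑ j, w j * (h' j : ℝ) ≤ u₁ + (u₂ - w i) - M := by
      rw [hWh']; linarith
    obtain ⟨a, b, hab, ha, hb⟩ := ih u₁ (u₂ - w i) hu₁ hu₂' h' hsum' hW'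
    refine ⟨a, Function.update b i (b i + 1), ?_, ha, ?_⟩
    · funext j
      by_cases hj : j = i
      · subst hj
        have h1 : a j + b j = h' j := congrFun hab j
        have h2 : h' j = h j - 1 := by rw [hh', Function.update_self]
        have : 1 ≤ h j := Nat.one_le_iff_ne_zero.mpr hi
        simp only [Pi.add_apply, Function.update_self]
        omega
      · have h1 : a j + b j = h' j := congrFun hab j
        have h2 : h' j = h j := by rw [hh', Function.update_of_ne hj]
        simp only [Pi.add_apply, Function.update_of_ne hj]
        omega
    · rw [sumW_update]
      push_cast
      linarith

private lemma splitN {d : ℕ} :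
    ∀ (n k₁ k₂ : ℕ) (h : Fin d → ℕ), ∑ j, h j = n → n ≤ k₁ + k₂ →
    ∃ a b : Fin d → ℕ, a + b = h ∧ ∑ j, a j ≤ k₁ ∧ ∑ j, b j ≤ k₂ := by
  intro n
  induction n with
  | zero =>
    intro k₁ k₂ h hsum _
    exact ⟨h, 0, by simp, by omega, by simp⟩
  | succ n ih =>
    intro k₁ k₂ h hsum hle
    by_cases hc : n + 1 ≤ k₁
    · exact ⟨h, 0, by simp, by omega, by simp⟩
    push_neg at hc
    have hk₂ : 1 ≤ k₂ := by omega
    obtain ⟨i, hi⟩ : ∃ i, h i ≠ 0 := by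
      by_contra hall
      push_neg at hall
      simp [hall] at hsum
    set h' : Fin d → ℕ := Function.update h i (h i - 1) with hh'
    have hle1 : h i ≤ ∑ j, h j := Finset.single_le_sum (fun j _ => Nat.zero_le _) (Finset.mem_univ i)
    have hi1 : 1 ≤ h i := Nat.one_le_iff_ne_zero.mpr hi
    have hsum' : ∑ j, h' j = n := by
      rw [hh', sumN_update]; omega
    obtain ⟨a, b, hab, ha, hb⟩ := ih k₁ (k₂ - 1) h' hsum' (by omega)
    refine ⟨a, Function.update b i (b i + 1), ?_, ha, ?_⟩
    · funext j
      by_cases hj : j = i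
      · subst hj
        have h1 : a j + b j = h' j := congrFun hab j
        have h2 : h' j = h j - 1 := by rw [hh', Function.update_self]
        have : 1 ≤ h j := Nat.one_le_iff_ne_zero.mpr hi
        simp only [Pi.add_apply, Function.update_self]
        omega
      · have h1 : a j + b j = h' j := congrFun hab j
        have h2 : h' j = h j := by rw [hh', Function.update_of_ne hj]
        simp only [Pi.add_apply, Function.update_of_ne hj]
        omega
    · rw [sumN_update]
      have : b i ≤ ∑ j, b j := Finset.single_le_sum (fun j _ => Nat.zero_le _) (Finset.mem_univ i)
      omega

theorem simplex_sumset {d : ℕ} (hd : 0 < d) (w : Fin d → ℝ) (hw : ∀ j, 0 < w j)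
    (u₁ u₂ : ℝ) (hu₁ : 0 < u₁) (hu₂ : 0 < u₂) :
    simplexW w (u₁ + u₂ - ⨆ i, w i) ⊆ simplexW w u₁ + simplexW w u₂ ∧
    simplexW w u₁ + simplexW w u₂ ⊆ simplexW w (u₁ + u₂) ∧
    ∀ k₁ k₂ : ℕ, 1 ≤ k₁ → 1 ≤ k₂ →
      simplex1 d k₁ + simplex1 d k₂ = simplex1 d (k₁ + k₂) := by
  have hM : ∀ j, w j ≤ ⨆ i, w i := fun j =>
    le_ciSup (Set.Finite.bddAbove (Set.finite_range w)) j
  refine ⟨?_, ?_, ?_⟩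
  · intro h hh
    obtain ⟨a, b, hab, ha, hb⟩ := splitW w hw (⨆ i, w i) hM (∑ j, h j) u₁ u₂
      hu₁.le hu₂.le h rfl hh
    exact Set.mem_add.mpr ⟨a, ha, b, hb, hab⟩
  · rintro x hx
    obtain ⟨a, ha, b, hb, rfl⟩ := Set.mem_add.mp hx
    have : ∑ j, w j * (((a + b) j : ℕ) : ℝ) = (∑ j, w j * (a j : ℝ)) + ∑ j, w j * (b j : ℝ) := by
      rw [← Finset.sum_add_distrib]
      refine Finset.sum_congr rfl fun j _ => ?_
      simp only [Pi.add_apply]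
      push_cast
      ring
    simp only [simplexW, Set.mem_setOf_eq] at ha hb ⊢
    rw [this]
    exact add_le_add ha hb
  · intro k₁ k₂ _ _
    ext h
    constructor
    · rintro hx
      obtain ⟨a, ha, b, hb, rfl⟩ := Set.mem_add.mp hx
      simp only [simplex1, Set.mem_setOf_eq] at ha hb ⊢
      calc ∑ j, (a + b) j = (∑ j, a j) + ∑ j, b j := by
            rw [← Finset.sum_add_distrib]; rfl
        _ ≤ k₁ + k₂ := add_le_add ha hb
    · intro hh
      obtain ⟨a, b, hab, ha, hb⟩ := splitN (∑ j, h j) k₁ k₂ h rfl hh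
      exact Set.mem_add.mpr ⟨a, ha, b, hb, hab⟩
end
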